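/- arXiv:1002.1335 — 10 statements merged into one kernel-verified Lean document; each statement's English description precedes it below -/
import Mathlib

section
/- For every node i ∈ V, the expected influence of the singleton initial set {i} satisfies the recursion σ^(V,{i}) = 1 + ∑_{j ∈ V \ {i}} w(i,j) · σ^(V \ {i}, {j}). -/
open Finset

noncomputable def cPath {V : Type*} [Fintype V] [DecidableEq V]
    (w : V → V → ℝ) (W D : Finset V) (j : V) : ℝ := by
  classical
  exact ∑' k : ℕ, ∑ x : Fin (k + 1) → V,
    if x 0 = j ∧ Function.Injective x ∧
        (∀ m : Fin (k + 1), (m : ℕ) < k → x m ∈ W \ D) ∧ x (Fin.last k) ∈ D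
    then ∏ i : Fin k, w (x i.succ) (x i.castSucc) else 0

noncomputable def cPathVia {V : Type*} [Fintype V] [DecidableEq V]
    (w : V → V → ℝ) (W D : Finset V) (j v : V) : ℝ := by
  classical
  exact ∑' k : ℕ, ∑ x : Fin (k + 1) → V,
    if x 0 = j ∧ Function.Injective x ∧
        (∀ m : Fin (k + 1), (m : ℕ) < k → x m ∈ W \ D) ∧ x (Fin.last k) ∈ D ∧
        (∃ u : Fin (k + 1), (u : ℕ) < k ∧ x u = v)
    then ∏ i : Fin k, w (x i.succ) (x i.castSucc) else 0

noncomputable def sigmaInfl {V : Type*} [Fintype V] [DecidableEq V]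
    (w : V → V → ℝ) (W A : Finset V) : ℝ :=
  ∑ j ∈ W, cPath w W A j

def pjv {V : Type*} (w : V → V → ℝ) (j v : V) : List V → ℝ
  | [] => w v j
  | l :: ls => w l j * pjv w l v ls

noncomputable def fPoly {ι : Type*} [DecidableEq ι] (m : ℕ) (T : Finset ι) (x : ι → ℝ) : ℝ :=
  (Nat.factorial m : ℝ) * ∑ S ∈ T.powersetCard m, ∏ s ∈ S, x s

/-!
An acyclic path that reaches `i` after at least one step arrives there through a last edge
`j → i` with `j ≠ i`; deleting that edge leaves an acyclic path inside `V \ {i}` that stops on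
first reaching `j`, and the path weight factors as `w i j` times the weight of the shorter path.
The path of length zero contributes `1`. Since acyclic paths have fewer than `card V` steps, all
series are finite sums, which can be reindexed freely.
-/

namespace InfluencePath

variable {V : Type*}

def pathWeight (w : V → V → ℝ) {k : ℕ} (x : Fin (k + 1) → V) : ℝ :=
  ∏ m : Fin k, w (x m.succ) (x m.castSucc)

lemma pathWeight_snoc (w : V → V → ℝ) {k : ℕ} (y : Fin (k + 1) → V) (v : V) :
    pathWeight w (Fin.snoc y v : Fin (k + 2) → V) = pathWeight w y * w v (y (Fin.last k)) := by
  simp only [pathWeight, Fin.prod_univ_castSucc, Fin.succ_castSucc, Fin.snoc_castSucc,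
    Fin.succ_last, Fin.snoc_last]

variable [DecidableEq V]

def IsAcyclicPath (W D : Finset V) {k : ℕ} (x : Fin (k + 1) → V) : Prop :=
  Function.Injective x ∧ (∀ m : Fin (k + 1), (m : ℕ) < k → x m ∈ W \ D) ∧ x (Fin.last k) ∈ D

instance (W D : Finset V) {k : ℕ} (x : Fin (k + 1) → V) : Decidable (IsAcyclicPath W D x) :=
  inferInstanceAs (Decidable (_ ∧ _ ∧ _))

lemma sum_ite_isAcyclicPath_singleton {U : Finset V} {k : ℕ} (S : Finset V)
    (y : Fin (k + 1) → V) (f : V → ℝ) :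
    ∑ j ∈ S, (if IsAcyclicPath U {j} y then f j else 0) =
      if y (Fin.last k) ∈ S ∧ IsAcyclicPath U {y (Fin.last k)} y then f (y (Fin.last k)) else 0 := by
  have hend : ∀ j, IsAcyclicPath U {j} y → y (Fin.last k) = j := fun j h => mem_singleton.mp h.2.2
  by_cases hS : y (Fin.last k) ∈ S
  · rw [sum_eq_single_of_mem _ hS fun j _ hj => if_neg fun h => hj (hend j h).symm]
    simp only [hS, true_and]
  · rw [if_neg fun h => hS h.1]
    exact sum_eq_zero fun j hj => if_neg fun h => hS (hend j h ▸ hj)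

lemma isAcyclicPath_snoc_singleton_iff {W : Finset V} {i : V} {k : ℕ} (y : Fin (k + 1) → V)
    (v : V) :
    (Fin.snoc y v : Fin (k + 2) → V) 0 ∈ W ∧ IsAcyclicPath W {i} (Fin.snoc y v : Fin (k + 2) → V) ↔
      v = i ∧ y 0 ∈ W.erase i ∧ y (Fin.last k) ∈ W.erase i ∧
        IsAcyclicPath (W.erase i) {y (Fin.last k)} y := by
  rw [← Fin.castSucc_zero, Fin.snoc_castSucc]
  simp only [IsAcyclicPath, Fin.snoc_injective_iff, Fin.snoc_last, mem_singleton, Set.mem_range,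
    not_exists, mem_sdiff, mem_erase]
  constructor
  · rintro ⟨h0, ⟨hinj, hv⟩, hpath, rfl⟩
    have hlast := hpath (Fin.last k).castSucc (by simp)
    rw [Fin.snoc_castSucc] at hlast
    refine ⟨rfl, ⟨hv 0, h0⟩, ⟨hv _, hlast.1⟩, hinj, fun m hm => ?_, trivial⟩
    have hm' := hpath m.castSucc (by simp; omega)
    rw [Fin.snoc_castSucc] at hm'
    exact ⟨⟨hv m, hm'.1⟩, fun h => by rw [hinj h] at hm; simp at hm⟩
  · rintro ⟨rfl, ⟨-, h0⟩, ⟨hlast, hW⟩, hinj, hpath, -⟩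
    have hy : ∀ m, y m ≠ v ∧ y m ∈ W := by
      intro m
      rcases Fin.eq_castSucc_or_eq_last m with ⟨m, rfl⟩ | rfl
      · exact (hpath _ (by simp)).1
      · exact ⟨hlast, hW⟩
    refine ⟨h0, ⟨hinj, fun m => (hy m).1⟩, fun m hm => ?_, rfl⟩
    rcases Fin.eq_castSucc_or_eq_last m with ⟨m, rfl⟩ | rfl
    · rw [Fin.snoc_castSucc]
      exact ⟨(hy m).2, (hy m).1⟩
    · simp at hm

variable [Fintype V]

noncomputable def pathSum (w : V → V → ℝ) (W D : Finset V) (k : ℕ) : ℝ :=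
  ∑ x : Fin (k + 1) → V, if x 0 ∈ W ∧ IsAcyclicPath W D x then pathWeight w x else 0

lemma cPath_eq_sum_range (w : V → V → ℝ) (W D : Finset V) (j : V) {M : ℕ}
    (hM : Fintype.card V ≤ M) :
    cPath w W D j = ∑ k ∈ range M, ∑ x : Fin (k + 1) → V,
      if x 0 = j ∧ IsAcyclicPath W D x then pathWeight w x else 0 := by
  -- an injective tuple has at most `card V` entries, so the series is a finite sum
  rw [cPath, tsum_eq_sum (s := range M)]
  · exact sum_congr rfl fun k _ => sum_congr rfl fun x _ => if_congr Iff.rfl rfl rfl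
  intro k hk
  refine sum_eq_zero fun x _ => if_neg ?_
  rintro ⟨-, hinj, -⟩
  have := Fintype.card_le_of_injective x hinj
  simp only [Fintype.card_fin, mem_range, not_lt] at this hk
  omega

lemma sigmaInfl_eq_sum_range_pathSum (w : V → V → ℝ) (W D : Finset V) {M : ℕ}
    (hM : Fintype.card V ≤ M) :
    sigmaInfl w W D = ∑ k ∈ range M, pathSum w W D k := by
  simp only [sigmaInfl, cPath_eq_sum_range w W D _ hM, pathSum]
  rw [sum_comm]
  refine sum_congr rfl fun k _ => ?_
  rw [sum_comm]
  refine sum_congr rfl fun x _ => ?_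
  simp only [ite_and, sum_ite_eq]

lemma pathSum_zero (w : V → V → ℝ) (W D : Finset V) : pathSum w W D 0 = #(W ∩ D) := by
  rw [pathSum, ← (Equiv.funUnique (Fin 1) V).symm.sum_comp]
  simp [IsAcyclicPath, pathWeight, Function.injective_of_subsingleton, Finset.filter_and]

lemma pathSum_succ_singleton (w : V → V → ℝ) (W : Finset V) (i : V) (k : ℕ) :
    pathSum w W {i} (k + 1) = ∑ j ∈ W.erase i, w i j * pathSum w (W.erase i) {j} k := by
  have hlhs : pathSum w W {i} (k + 1) = ∑ y : Fin (k + 1) → V,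
      if y 0 ∈ W.erase i ∧ y (Fin.last k) ∈ W.erase i ∧
          IsAcyclicPath (W.erase i) {y (Fin.last k)} y
      then pathWeight w y * w i (y (Fin.last k)) else 0 := by
    rw [pathSum, ← (Fin.snocEquiv fun _ => V).sum_comp, Fintype.sum_prod_type, sum_comm]
    refine sum_congr rfl fun y _ => ?_
    have hsnoc : ∀ v, (Fin.snocEquiv fun _ : Fin (k + 2) => V) (v, y) = Fin.snoc y v :=
      fun _ => rfl
    simp only [hsnoc, isAcyclicPath_snoc_singleton_iff, pathWeight_snoc, ite_and,
      sum_ite_eq', mem_univ, if_true]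
  rw [hlhs]
  simp only [pathSum, mul_sum, mul_ite, mul_zero]
  rw [sum_comm]
  refine sum_congr rfl fun y _ => ?_
  by_cases h0 : y 0 ∈ W.erase i
  · simp only [h0, true_and, sum_ite_isAcyclicPath_singleton, mul_comm]
  · simp only [h0, false_and, if_false, sum_const_zero]

lemma sigmaInfl_singleton (w : V → V → ℝ) {W : Finset V} {i : V} (hi : i ∈ W) :
    sigmaInfl w W {i} = 1 + ∑ j ∈ W.erase i, w i j * sigmaInfl w (W.erase i) {j} := by
  rw [sigmaInfl_eq_sum_range_pathSum w _ _ (Nat.le_succ _), sum_range_succ', pathSum_zero,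
    inter_singleton_of_mem hi, card_singleton, Nat.cast_one, add_comm]
  simp only [sigmaInfl_eq_sum_range_pathSum w _ _ le_rfl, pathSum_succ_singleton, mul_sum]
  rw [sum_comm]

end InfluencePath

theorem stmt0_general {V : Type*} [Fintype V] [DecidableEq V] (w : V → V → ℝ)
    (i : V) :
    sigmaInfl w Finset.univ {i}
      = 1 + ∑ j ∈ Finset.univ.erase i, w i j * sigmaInfl w (Finset.univ.erase i) {j} :=
  InfluencePath.sigmaInfl_singleton w (Finset.mem_univ i)

theorem stmt0 {V : Type*} [Fintype V] [DecidableEq V] (w : V → V → ℝ)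
    (hw0 : ∀ i j : V, 0 ≤ w i j)
    (hw1 : ∀ j : V, ∑ i ∈ Finset.univ.erase j, w i j ≤ 1)
    (i : V) :
    sigmaInfl w Finset.univ {i}
      = 1 + ∑ j ∈ Finset.univ.erase i, w i j * sigmaInfl w (Finset.univ.erase i) {j} :=
  stmt0_general w i
end

section
/- For every nonempty initial set A ⊆ V, writing N_i := (V \ A) ∪ {i} for each i ∈ A, the expected influence decomposes as σ^(V,A) = ∑_{i ∈ A} σ^(N_i, {i}). -/
open Finset

/-!
An acyclic path from `j` to `A` whose earlier nodes avoid `A` ends at exactly one `i ∈ A`, and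
its earlier nodes lie in `W \ A = Nᵢ \ {i}` where `Nᵢ = (W \ A) ∪ {i}`. So it is precisely an
acyclic path from `j` to `{i}` inside `Nᵢ`, and summing over the endpoint `i` splits `c^W(j → A)`.
Starting nodes outside `Nᵢ` contribute nothing to `σ^(Nᵢ, {i})`.
-/

section AcyclicPaths

variable {V : Type*} [DecidableEq V] (w : V → V → ℝ)

noncomputable def admissiblePathWeight (W D : Finset V) (j : V) {k : ℕ} (x : Fin (k + 1) → V) :
    ℝ := by
  classical
  exact if x 0 = j ∧ Function.Injective x ∧
      (∀ m : Fin (k + 1), (m : ℕ) < k → x m ∈ W \ D) ∧ x (Fin.last k) ∈ D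
    then ∏ i : Fin k, w (x i.succ) (x i.castSucc) else 0

theorem cPath_eq_tsum [Fintype V] (W D : Finset V) (j : V) :
    cPath w W D j = ∑' k : ℕ, ∑ x : Fin (k + 1) → V, admissiblePathWeight w W D j x :=
  rfl

theorem admissiblePathWeight_of_card_le [Fintype V] {W D : Finset V} {j : V} {k : ℕ}
    (hk : Fintype.card V ≤ k) (x : Fin (k + 1) → V) : admissiblePathWeight w W D j x = 0 := by
  refine if_neg fun ⟨_, hinj, _⟩ => ?_
  have := Fintype.card_le_of_injective x hinj
  simp only [Fintype.card_fin] at this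
  omega

theorem summable_admissiblePathWeight [Fintype V] (W D : Finset V) (j : V) :
    Summable fun k : ℕ => ∑ x : Fin (k + 1) → V, admissiblePathWeight w W D j x :=
  summable_of_ne_finset_zero (s := range (Fintype.card V)) fun _ hk =>
    sum_eq_zero fun x _ => admissiblePathWeight_of_card_le w (by simpa using hk) x

theorem admissiblePathWeight_of_notMem {W D : Finset V} {j : V} (hD : D ⊆ W) (hj : j ∉ W)
    {k : ℕ} (x : Fin (k + 1) → V) : admissiblePathWeight w W D j x = 0 := by
  refine if_neg fun ⟨h0, _, hmem, hlast⟩ => ?_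
  rcases k with _ | k
  · exact hj (hD (h0 ▸ hlast))
  · exact hj (h0 ▸ (mem_sdiff.mp (hmem 0 k.succ_pos)).1)

theorem cPath_of_notMem [Fintype V] {W D : Finset V} {j : V} (hD : D ⊆ W) (hj : j ∉ W) :
    cPath w W D j = 0 := by
  simp [cPath_eq_tsum, admissiblePathWeight_of_notMem w hD hj]

theorem admissiblePathWeight_eq_sum_singleton (W A : Finset V) (j : V) {k : ℕ}
    (x : Fin (k + 1) → V) :
    admissiblePathWeight w W A j x
      = ∑ i ∈ A, admissiblePathWeight w (W \ A ∪ {i}) {i} j x := by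
  have hN : ∀ i ∈ A, (W \ A ∪ {i}) \ {i} = W \ A := fun i hi => by
    ext v; by_cases v = i <;> aesop
  have hterm : ∀ i ∈ A, admissiblePathWeight w (W \ A ∪ {i}) {i} j x
      = if x (Fin.last k) = i then admissiblePathWeight w W A j x else 0 := fun i hi => by
    unfold admissiblePathWeight
    rw [hN i hi]
    split_ifs <;> simp_all
  rw [sum_congr rfl hterm, sum_ite_eq]
  split_ifs with hlast
  · rfl
  · exact if_neg fun h => hlast h.2.2.2

theorem cPath_eq_sum_singleton [Fintype V] (W A : Finset V) (j : V) :
    cPath w W A j = ∑ i ∈ A, cPath w (W \ A ∪ {i}) {i} j := by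
  simp only [cPath_eq_tsum]
  rw [← Summable.tsum_finsetSum fun i _ => summable_admissiblePathWeight w _ _ j]
  refine tsum_congr fun k => ?_
  rw [sum_comm]
  exact sum_congr rfl fun x _ => admissiblePathWeight_eq_sum_singleton w W A j x

theorem sigmaInfl_eq_sum_singleton [Fintype V] {W A : Finset V} (hA : A ⊆ W) :
    sigmaInfl w W A = ∑ i ∈ A, sigmaInfl w (W \ A ∪ {i}) {i} := by
  unfold sigmaInfl
  simp_rw [cPath_eq_sum_singleton w W A]
  rw [sum_comm]
  refine sum_congr rfl fun i hi => (sum_subset ?_ fun j _ hj => ?_).symm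
  · exact union_subset sdiff_subset (singleton_subset_iff.mpr (hA hi))
  · exact cPath_of_notMem w (by simp) hj

end AcyclicPaths

theorem stmt1_general {V : Type*} [Fintype V] [DecidableEq V] (w : V → V → ℝ)
    (A : Finset V) :
    sigmaInfl w Finset.univ A
      = ∑ i ∈ A, sigmaInfl w ((Finset.univ \ A) ∪ {i}) {i} :=
  sigmaInfl_eq_sum_singleton w (subset_univ A)

theorem stmt1 {V : Type*} [Fintype V] [DecidableEq V] (w : V → V → ℝ)
    (hw0 : ∀ i j : V, 0 ≤ w i j)
    (hw1 : ∀ j : V, ∑ i ∈ Finset.univ.erase j, w i j ≤ 1)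
    (A : Finset V) (hA : A.Nonempty) :
    sigmaInfl w Finset.univ A
      = ∑ i ∈ A, sigmaInfl w ((Finset.univ \ A) ∪ {i}) {i} :=
  stmt1_general w A
end

section
/- For every set A ⊆ V, every node v ∈ V \ A and every node j ∉ A ∪ {v}, one has c(j → A ∪ {v}) = c^{V \ A}(j → {v}) + c^{V \ {v}}(j → A); that is, the probability of reaching A ∪ {v} through an acyclic path splits into the probability of reaching v while avoiding A plus the probability of reaching A while avoiding v. -/
open Finset

/-!
An acyclic path into `A ∪ {v}` ends either at `v`, and then its earlier nodes avoid `A`, or in `A`,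
and then its earlier nodes avoid `v`; so the path sums split path by path. Every series involved
has finitely many nonzero terms, since an injective path has at most `|V|` nodes.
-/

namespace AcyclicPath

variable {V : Type*} [DecidableEq V]

def IsAdmissible (W D : Finset V) (j : V) {k : ℕ} (x : Fin (k + 1) → V) : Prop :=
  x 0 = j ∧ Function.Injective x ∧
    (∀ m : Fin (k + 1), (m : ℕ) < k → x m ∈ W \ D) ∧ x (Fin.last k) ∈ D

def weight (w : V → V → ℝ) {k : ℕ} (x : Fin (k + 1) → V) : ℝ :=
  ∏ i : Fin k, w (x i.succ) (x i.castSucc)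

lemma isAdmissible_insert_iff {W A : Finset V} {v : V} (j : V) {k : ℕ} (x : Fin (k + 1) → V) :
    IsAdmissible W (insert v A) j x ↔
      IsAdmissible (W \ A) {v} j x ∨ IsAdmissible (W.erase v) A j x := by
  have hW₁ : ∀ y, y ∈ (W \ A) \ {v} ↔ y ∈ W \ insert v A := by
    intro y; simp only [mem_sdiff, mem_insert, mem_singleton]; tauto
  have hW₂ : ∀ y, y ∈ W.erase v \ A ↔ y ∈ W \ insert v A := by
    intro y; simp only [mem_sdiff, mem_insert, mem_erase]; tauto
  simp only [IsAdmissible, hW₁, hW₂, mem_insert, mem_singleton]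
  tauto

lemma not_isAdmissible_singleton_and {W₁ W₂ A : Finset V} {v : V} (hv : v ∉ A) (j : V) {k : ℕ}
    (x : Fin (k + 1) → V) : ¬ (IsAdmissible W₁ {v} j x ∧ IsAdmissible W₂ A j x) :=
  fun ⟨⟨_, _, _, hv'⟩, ⟨_, _, _, hA⟩⟩ => hv (mem_singleton.1 hv' ▸ hA)

section Fintype

variable [Fintype V]

open Classical in
noncomputable def stepSum (w : V → V → ℝ) (W D : Finset V) (j : V) (k : ℕ) : ℝ :=
  ∑ x : Fin (k + 1) → V, if IsAdmissible W D j x then weight w x else 0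

lemma cPath_eq_tsum_stepSum (w : V → V → ℝ) (W D : Finset V) (j : V) :
    cPath w W D j = ∑' k, stepSum w W D j k := by
  unfold cPath stepSum IsAdmissible weight
  congr! 5

lemma stepSum_eq_zero_of_card_le (w : V → V → ℝ) (W D : Finset V) (j : V) {k : ℕ}
    (hk : Fintype.card V ≤ k) : stepSum w W D j k = 0 := by
  refine sum_eq_zero fun x _ => if_neg fun ⟨_, hinj, _⟩ => ?_
  have := Fintype.card_le_of_injective x hinj
  simp only [Fintype.card_fin] at this
  omega

lemma summable_stepSum (w : V → V → ℝ) (W D : Finset V) (j : V) :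
    Summable (stepSum w W D j) :=
  summable_of_ne_finset_zero (s := range (Fintype.card V)) fun _ hk =>
    stepSum_eq_zero_of_card_le w W D j (by simpa using hk)

lemma cPath_eq_add_of_isAdmissible_iff (w : V → V → ℝ) {W D W₁ D₁ W₂ D₂ : Finset V}
    (j : V)
    (hsplit : ∀ (k : ℕ) (x : Fin (k + 1) → V),
      IsAdmissible W D j x ↔ IsAdmissible W₁ D₁ j x ∨ IsAdmissible W₂ D₂ j x)
    (hdisj : ∀ (k : ℕ) (x : Fin (k + 1) → V),
      ¬ (IsAdmissible W₁ D₁ j x ∧ IsAdmissible W₂ D₂ j x)) :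
    cPath w W D j = cPath w W₁ D₁ j + cPath w W₂ D₂ j := by
  simp only [cPath_eq_tsum_stepSum]
  rw [← (summable_stepSum w W₁ D₁ j).tsum_add (summable_stepSum w W₂ D₂ j)]
  refine tsum_congr fun k => ?_
  unfold stepSum
  rw [← sum_add_distrib]
  refine sum_congr rfl fun x _ => ?_
  by_cases h₁ : IsAdmissible W₁ D₁ j x
  · have h₂ : ¬ IsAdmissible W₂ D₂ j x := fun h₂ => hdisj k x ⟨h₁, h₂⟩
    simp [(hsplit k x).2 (.inl h₁), h₁, h₂]
  · by_cases h₂ : IsAdmissible W₂ D₂ j x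
    · simp [(hsplit k x).2 (.inr h₂), h₁, h₂]
    · simp [(hsplit k x).not.2 (not_or.2 ⟨h₁, h₂⟩), h₁, h₂]

lemma cPath_insert (w : V → V → ℝ) (W A : Finset V) {v : V} (hv : v ∉ A) (j : V) :
    cPath w W (insert v A) j = cPath w (W \ A) {v} j + cPath w (W.erase v) A j :=
  cPath_eq_add_of_isAdmissible_iff w j (fun _ => isAdmissible_insert_iff j)
    (fun _ => not_isAdmissible_singleton_and hv j)

end Fintype

end AcyclicPath

theorem stmt4_general {V : Type*} [Fintype V] [DecidableEq V] (w : V → V → ℝ)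
    (A : Finset V) (v : V) (hv : v ∉ A) (j : V) :
    cPath w Finset.univ (insert v A) j
      = cPath w (Finset.univ \ A) {v} j + cPath w (Finset.univ.erase v) A j :=
  AcyclicPath.cPath_insert w univ A hv j

theorem stmt4 {V : Type*} [Fintype V] [DecidableEq V] (w : V → V → ℝ)
    (hw0 : ∀ i j : V, 0 ≤ w i j)
    (hw1 : ∀ j : V, ∑ i ∈ Finset.univ.erase j, w i j ≤ 1)
    (A : Finset V) (v : V) (hv : v ∉ A) (j : V) (hj : j ∉ insert v A) :
    cPath w Finset.univ (insert v A) j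
      = cPath w (Finset.univ \ A) {v} j + cPath w (Finset.univ.erase v) A j :=
  stmt4_general w A v hv j
end

section
/- For every set A ⊆ V and distinct nodes j, v ∉ A, the via-v acyclic path probability decomposes at the first visit to v: c(j →v→ A) = ∑_{L' ⊆ (V \ A) \ {j,v}} ∑_{L ∈ Π(L')} p_{j,v}(L) · c^{V \ (L' ∪ {j})}(v → A). -/
/-!
An acyclic path from `j` through `v` to `A` is cut at its first visit to `v`: it is
`j :: (L ++ t)`, where `L` is an ordering of a set `L' ⊆ (V \ A) \ {j, v}` and `t` is an acyclic
path from `v` to `A` avoiding `j` and `L'`. This is a bijection, and the weight of the path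
factorises as `p_{j,v}(L)` times the weight of `t`. To carry this out, path probabilities are
first rewritten as finite sums over duplicate-free lists.
-/

open Finset

section

variable {V : Type*}

def nodupLists (V : Type*) [Fintype V] : Finset (List V) :=
  univ.map (Function.Embedding.subtype List.Nodup)

@[simp] lemma mem_nodupLists [Fintype V] {l : List V} : l ∈ nodupLists V ↔ l.Nodup := by
  simp [nodupLists]

def listWeight (w : V → V → ℝ) : List V → ℝ
  | a :: b :: t => w b a * listWeight w (b :: t)
  | _ => 1

lemma listWeight_ofFn (w : V → V → ℝ) :
    ∀ {k : ℕ} (x : Fin (k + 1) → V),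
      listWeight w (List.ofFn x) = ∏ i : Fin k, w (x i.succ) (x i.castSucc)
  | 0, x => rfl
  | k + 1, x => by
    calc listWeight w (List.ofFn x)
        = w (x 1) (x 0) * listWeight w (List.ofFn fun i => x i.succ) := by
          rw [List.ofFn_succ, List.ofFn_succ]; rfl
      _ = _ := by rw [listWeight_ofFn, Fin.prod_univ_succ]; rfl

lemma listWeight_cons_append_eq_pjv_mul (w : V → V → ℝ) {v : V} {t : List V}
    (ht : t.head? = some v) :
    ∀ (j : V) (L : List V), listWeight w (j :: (L ++ t)) = pjv w j v L * listWeight w t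
  | j, [] => by
    obtain ⟨r, rfl⟩ : ∃ r, t = v :: r := List.head?_eq_some_iff.1 ht
    rfl
  | j, a :: L => by
    rw [List.cons_append, listWeight, listWeight_cons_append_eq_pjv_mul w ht a L, pjv, mul_assoc]

/-- `l = [x₀, …, xₖ]` with `x₀ = j`, `x₀, …, x_{k-1} ∈ W \ D` and `xₖ ∈ D`; the distinctness of
the `xₘ` is imposed separately, by summing over `nodupLists`. -/
def IsPathTo [DecidableEq V] (W D : Finset V) (j : V) (l : List V) : Prop :=
  l.head? = some j ∧ (∀ a ∈ l.dropLast, a ∈ W \ D) ∧ ∀ a ∈ l.getLast?, a ∈ D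

lemma List.mem_dropLast_ofFn {k : ℕ} (x : Fin (k + 1) → V) (a : V) :
    a ∈ (List.ofFn x).dropLast ↔ ∃ m : Fin (k + 1), (m : ℕ) < k ∧ x m = a := by
  rw [List.ofFn_succ', List.concat_eq_append, List.dropLast_concat, List.mem_ofFn]
  constructor
  · rintro ⟨i, rfl⟩
    exact ⟨i.castSucc, i.isLt, rfl⟩
  · rintro ⟨m, hm, rfl⟩
    exact ⟨⟨m, hm⟩, rfl⟩

lemma isPathTo_ofFn_iff [DecidableEq V] (W D : Finset V) (j : V) {k : ℕ} (x : Fin (k + 1) → V) :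
    IsPathTo W D j (List.ofFn x) ↔
      x 0 = j ∧ (∀ m : Fin (k + 1), (m : ℕ) < k → x m ∈ W \ D) ∧ x (Fin.last k) ∈ D := by
  have hlast : (List.ofFn x).getLast? = some (x (Fin.last k)) := by
    rw [List.ofFn_succ', List.concat_eq_append, List.getLast?_concat]
  have hhead : (List.ofFn x).head? = some (x 0) := by
    rw [List.ofFn_succ, List.head?_cons]
  simp only [IsPathTo, hhead, hlast, Option.some.injEq, Option.mem_def, forall_eq',
    List.mem_dropLast_ofFn, forall_exists_index, and_imp]
  grind

lemma tsum_ofFn_eq_sum_nodupLists {M : Type*} [AddCommMonoid M] [TopologicalSpace M] [Fintype V]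
    [DecidableEq V] (P : List V → Prop) [DecidablePred P] (hP : ¬ P []) (f : List V → M) :
    ∑' k : ℕ, ∑ x : Fin (k + 1) → V,
        (if (List.ofFn x).Nodup ∧ P (List.ofFn x) then f (List.ofFn x) else 0) =
      ∑ l ∈ nodupLists V with P l, f l := by
  rw [tsum_eq_sum (s := range (Fintype.card V)), sum_sigma']
  · refine sum_bij_ne_zero (fun p _ _ => List.ofFn p.2) ?_ ?_ ?_ ?_
    · intro p _ hp
      have := (ite_ne_right_iff.1 hp).1
      exact mem_filter.2 ⟨mem_nodupLists.2 this.1, this.2⟩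
    · rintro ⟨k, x⟩ - - ⟨k', x'⟩ - - h
      obtain rfl : k = k' := by simpa using congrArg List.length h
      obtain rfl : x = x' := List.ofFn_injective h
      rfl
    · rintro (_ | ⟨a, r⟩) hl hfl <;> rw [mem_filter, mem_nodupLists] at hl
      · exact absurd hl.2 hP
      · refine ⟨⟨r.length, (a :: r).get⟩, by simpa using hl.1.length_le_card, ?_, List.ofFn_get _⟩
        simpa only [List.ofFn_get, if_pos hl] using hfl
    · intro p _ hp
      exact if_pos (ite_ne_right_iff.1 hp).1
  · intro k hk
    refine sum_eq_zero fun x _ => if_neg fun hx => ?_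
    have := Fintype.card_le_of_injective x (List.nodup_ofFn.1 hx.1)
    simp only [Fintype.card_fin, mem_range, not_lt] at this hk
    omega

instance [DecidableEq V] (W D : Finset V) (j : V) : DecidablePred (IsPathTo W D j) :=
  fun _ => inferInstanceAs (Decidable (_ ∧ _ ∧ _))

lemma cPath_eq_sum [Fintype V] [DecidableEq V] (w : V → V → ℝ) (W D : Finset V) (j : V) :
    cPath w W D j = ∑ l ∈ nodupLists V with IsPathTo W D j l, listWeight w l := by
  rw [cPath, ← tsum_ofFn_eq_sum_nodupLists _ (by simp [IsPathTo])]
  refine tsum_congr fun k => sum_congr rfl fun x _ => if_congr ?_ (listWeight_ofFn w x).symm rfl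
  rw [List.nodup_ofFn, isPathTo_ofFn_iff]
  tauto

lemma cPathVia_eq_sum [Fintype V] [DecidableEq V] (w : V → V → ℝ) (W D : Finset V) (j v : V) :
    cPathVia w W D j v =
      ∑ l ∈ nodupLists V with IsPathTo W D j l ∧ v ∈ l.dropLast, listWeight w l := by
  rw [cPathVia, ← tsum_ofFn_eq_sum_nodupLists _ (by simp [IsPathTo])]
  refine tsum_congr fun k => sum_congr rfl fun x _ => if_congr ?_ (listWeight_ofFn w x).symm rfl
  rw [List.nodup_ofFn, isPathTo_ofFn_iff, List.mem_dropLast_ofFn]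
  tauto

lemma List.perm_toList_iff [DecidableEq V] {L : List V} {S : Finset V} :
    L.Perm S.toList ↔ L.Nodup ∧ L.toFinset = S := by
  refine ⟨fun h => ⟨h.nodup_iff.2 S.nodup_toList, ?_⟩, ?_⟩
  · rw [List.toFinset_eq_of_perm _ _ h, Finset.toList_toFinset]
  · rintro ⟨hL, rfl⟩
    exact (List.toFinset_toList hL).symm

lemma sum_powerset_sum_permutations [Fintype V] [DecidableEq V] (S : Finset V)
    {M : Type*} [AddCommMonoid M] (g : Finset V → List V → M) :
    ∑ L' ∈ S.powerset, (L'.toList.permutations.map (g L')).sum =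
      ∑ L ∈ nodupLists V with L.toFinset ⊆ S, g L.toFinset L := by
  rw [← sum_fiberwise_of_maps_to (g := List.toFinset) (t := S.powerset)
    fun L hL => mem_powerset.2 (mem_filter.1 hL).2]
  refine sum_congr rfl fun L' hL' => ?_
  rw [← List.sum_toFinset _ (List.nodup_permutations _ L'.nodup_toList)]
  refine sum_congr (ext fun L => ?_) fun L hL => ?_
  · simp only [List.mem_toFinset, List.mem_permutations, List.perm_toList_iff, mem_filter,
      mem_nodupLists]
    constructor
    · rintro ⟨hL, rfl⟩
      exact ⟨⟨hL, mem_powerset.1 hL'⟩, rfl⟩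
    · exact fun h => ⟨h.1.1, h.2⟩
  · rw [(mem_filter.1 hL).2]

lemma List.takeWhile_ne_append_of_head?_eq [DecidableEq V] {v : V} {L t : List V} (hvL : v ∉ L)
    (ht : t.head? = some v) : (L ++ t).takeWhile (· ≠ v) = L := by
  obtain ⟨r, rfl⟩ : ∃ r, t = v :: r := List.head?_eq_some_iff.1 ht
  rw [List.takeWhile_append_of_pos fun a ha => by simpa using ne_of_mem_of_not_mem ha hvL]
  simp

lemma List.append_inj_of_head?_eq [DecidableEq V] {v : V} {L₁ L₂ t₁ t₂ : List V}
    (hv₁ : v ∉ L₁) (hv₂ : v ∉ L₂) (ht₁ : t₁.head? = some v) (ht₂ : t₂.head? = some v)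
    (h : L₁ ++ t₁ = L₂ ++ t₂) : L₁ = L₂ ∧ t₁ = t₂ := by
  have hL : L₁ = L₂ := by
    rw [← List.takeWhile_ne_append_of_head?_eq hv₁ ht₁, h,
      List.takeWhile_ne_append_of_head?_eq hv₂ ht₂]
  subst hL
  exact ⟨rfl, List.append_cancel_left h⟩

section ViaPaths

variable [Fintype V] [DecidableEq V] {A : Finset V} {j v : V}

/-- The last vertex of `t` lies in `A`, so on the right only the inner vertices of `t` have to
avoid `j` and `L`. -/
lemma nodup_isPathTo_cons_append_iff (hj : j ∉ A) (hv : v ∉ A) (hjv : j ≠ v) {L t : List V}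
    (hvL : v ∉ L) (ht : t.head? = some v) :
    ((j :: (L ++ t)).Nodup ∧ IsPathTo univ A j (j :: (L ++ t)) ∧ v ∈ (j :: (L ++ t)).dropLast) ↔
      (L.Nodup ∧ L.toFinset ⊆ (univ \ A) \ {j, v}) ∧
        t.Nodup ∧ IsPathTo (univ \ insert j L.toFinset) A v t := by
  obtain ⟨r, rfl⟩ : ∃ r, t = v :: r := List.head?_eq_some_iff.1 ht
  rcases r.eq_nil_or_concat' with rfl | ⟨r, b, rfl⟩
  · rw [show j :: (L ++ [v]) = (j :: L) ++ [v] from rfl]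
    simp only [IsPathTo, List.dropLast_concat, List.getLast?_concat, List.dropLast_singleton,
      List.getLast?_singleton]
    simp [hj, hv, hvL, hjv.symm]
  · rw [show j :: (L ++ v :: (r ++ [b])) = (j :: L ++ v :: r) ++ [b] by simp,
      show v :: (r ++ [b]) = (v :: r) ++ [b] from rfl]
    simp only [IsPathTo, List.dropLast_concat, List.getLast?_concat, List.nodup_append,
      List.nodup_cons, Finset.subset_iff, List.mem_toFinset, mem_sdiff, mem_univ, true_and,
      mem_insert, mem_singleton, not_or]
    grind

lemma sum_isPathTo_via_eq_sum_sigma (w : V → V → ℝ) (hj : j ∉ A) (hv : v ∉ A) (hjv : j ≠ v) :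
    ∑ l ∈ nodupLists V with IsPathTo univ A j l ∧ v ∈ l.dropLast, listWeight w l =
      ∑ x ∈ ({L ∈ nodupLists V | L.toFinset ⊆ (univ \ A) \ {j, v}}).sigma
          (fun L => {t ∈ nodupLists V | IsPathTo (univ \ insert j L.toFinset) A v t}),
        pjv w j v x.1 * listWeight w x.2 := by
  set pairs := ({L ∈ nodupLists V | L.toFinset ⊆ (univ \ A) \ {j, v}}).sigma
    (fun L => {t ∈ nodupLists V | IsPathTo (univ \ insert j L.toFinset) A v t}) with hpairs
  have split_data : ∀ x ∈ pairs, v ∉ x.1 ∧ x.2.head? = some v := by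
    simp only [hpairs, mem_sigma, mem_filter]
    exact fun x hx => ⟨fun hvL => by simpa using hx.1.2 (List.mem_toFinset.2 hvL), hx.2.2.1⟩
  symm
  refine sum_nbij (fun x => j :: (x.1 ++ x.2)) ?_ ?_ ?_ fun x hx => ?_
  · intro x hx
    obtain ⟨hvL, ht⟩ := split_data x hx
    simp only [hpairs, mem_sigma, mem_filter, mem_nodupLists] at hx ⊢
    exact (nodup_isPathTo_cons_append_iff hj hv hjv hvL ht).2 hx
  · rintro ⟨L₁, t₁⟩ hx₁ ⟨L₂, t₂⟩ hx₂ h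
    obtain ⟨hv₁, ht₁⟩ := split_data _ hx₁
    obtain ⟨hv₂, ht₂⟩ := split_data _ hx₂
    obtain ⟨rfl, rfl⟩ := List.append_inj_of_head?_eq hv₁ hv₂ ht₁ ht₂ (List.cons.inj h).2
    rfl
  · intro l hl
    simp only [coe_filter, mem_nodupLists, Set.mem_ofPred_eq] at hl
    obtain ⟨hnd, hpath, hvl⟩ := hl
    obtain ⟨m, rfl⟩ : ∃ m, l = j :: m := List.head?_eq_some_iff.1 hpath.1
    have hvm : v ∈ m := (List.mem_cons.1 (List.dropLast_subset _ hvl)).resolve_left hjv.symm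
    obtain ⟨s, r, rfl⟩ := List.append_of_mem hvm
    have hvs : v ∉ s := fun h =>
      List.disjoint_of_nodup_append (List.nodup_cons.1 hnd).2 h List.mem_cons_self
    refine ⟨⟨s, v :: r⟩, ?_, rfl⟩
    simp only [hpairs, coe_sigma, Set.mem_sigma_iff, coe_filter, mem_nodupLists, Set.mem_ofPred_eq]
    exact (nodup_isPathTo_cons_append_iff hj hv hjv hvs rfl).1 ⟨hnd, hpath, hvl⟩
  · exact (listWeight_cons_append_eq_pjv_mul w (split_data x hx).2 j x.1).symm

end ViaPaths

end

theorem stmt6_general {V : Type*} [Fintype V] [DecidableEq V] (w : V → V → ℝ)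
    (A : Finset V) (j v : V) (hj : j ∉ A) (hv : v ∉ A) (hjv : j ≠ v) :
    cPathVia w Finset.univ A j v
      = ∑ L' ∈ ((Finset.univ \ A) \ {j, v}).powerset,
          (L'.toList.permutations.map
            (fun L => pjv w j v L * cPath w (Finset.univ \ insert j L') A v)).sum := by
  rw [sum_powerset_sum_permutations, cPathVia_eq_sum, sum_isPathTo_via_eq_sum_sigma w hj hv hjv,
    sum_sigma]
  simp_rw [cPath_eq_sum, mul_sum]

theorem stmt6 {V : Type*} [Fintype V] [DecidableEq V] (w : V → V → ℝ)
    (hw0 : ∀ i j : V, 0 ≤ w i j)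
    (hw1 : ∀ j : V, ∑ i ∈ Finset.univ.erase j, w i j ≤ 1)
    (A : Finset V) (j v : V) (hj : j ∉ A) (hv : v ∉ A) (hjv : j ≠ v) :
    cPathVia w Finset.univ A j v
      = ∑ L' ∈ ((Finset.univ \ A) \ {j, v}).powerset,
          (L'.toList.permutations.map
            (fun L => pjv w j v L * cPath w (Finset.univ \ insert j L') A v)).sum :=
  stmt6_general w A j v hj hv hjv
end

section
/- For every set A ⊆ V and distinct nodes j, v ∉ A, the via-v acyclic path probability is bounded by the A-avoiding hitting probability of v: c(j →v→ A) ≤ c^{V \ A}(j → {v}). -/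
open Finset

/-!
Splitting off the first step of a path gives, for `j ∈ W \ D`, the recursion
`c^W(j → D) = ∑ i, w i j * c^(W.erase j)(i → D)`, acyclicity being encoded by removing the node
just left from the allowed set; the via-`v` sums obey the same recursion as long as `j ≠ v`.
By strong induction on `W` the comparison therefore reduces to the moment the path reaches `v`:
there the left side becomes the hitting probability of `A` from `v`, which is at most `1` because
the weights into each node sum to at most `1`, while the right side is exactly `1`.
-/

section PathWeight

variable {V : Type*} (w : V → V → ℝ)

def pathWeight {k : ℕ} (x : Fin (k + 1) → V) : ℝ :=
  ∏ i : Fin k, w (x i.succ) (x i.castSucc)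

variable {w} in
lemma pathWeight_nonneg (hw0 : ∀ i j : V, 0 ≤ w i j) {k : ℕ} (x : Fin (k + 1) → V) :
    0 ≤ pathWeight w x :=
  prod_nonneg fun _ _ => hw0 _ _

lemma pathWeight_cons {k : ℕ} (i : V) (y : Fin (k + 1) → V) :
    pathWeight w (Fin.cons i y : Fin (k + 2) → V) = w (y 0) i * pathWeight w y :=
  Fin.prod_univ_succ _

lemma sum_tuple_succ [Fintype V] {k : ℕ} (f : (Fin (k + 2) → V) → ℝ) :
    ∑ x, f x = ∑ i : V, ∑ y : Fin (k + 1) → V, f (Fin.cons i y) := by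
  rw [← Fintype.sum_prod_type']
  exact (Fintype.sum_equiv (Fin.consEquiv fun _ => V) _ _ fun _ => rfl).symm

lemma sum_ite_tuple_cons [Fintype V] [DecidableEq V] (j : V) {k : ℕ}
    (P : (Fin (k + 2) → V) → Prop) (Q : (Fin (k + 1) → V) → Prop) [DecidablePred P]
    [DecidablePred Q] (hPQ : ∀ i y, P (Fin.cons i y) ↔ i = j ∧ Q y) :
    ∑ x, (if P x then pathWeight w x else 0) =
      ∑ i, w i j * ∑ y, if y 0 = i ∧ Q y then pathWeight w y else 0 := by
  simp_rw [sum_tuple_succ, hPQ, pathWeight_cons, mul_sum, ite_and, mul_ite, mul_zero]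
  conv_rhs => rw [sum_comm]
  simp

end PathWeight

section AcyclicPath

variable {V : Type*} [Fintype V] [DecidableEq V]

def IsAcyclicPath (W D : Finset V) {k : ℕ} (x : Fin (k + 1) → V) : Prop :=
  Function.Injective x ∧ (∀ m : Fin (k + 1), (m : ℕ) < k → x m ∈ W \ D) ∧ x (Fin.last k) ∈ D

def PassesThrough (v : V) {k : ℕ} (x : Fin (k + 1) → V) : Prop :=
  ∃ u : Fin (k + 1), (u : ℕ) < k ∧ x u = v

instance (W D : Finset V) (k : ℕ) : DecidablePred (IsAcyclicPath W D (k := k)) :=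
  fun _ => by unfold IsAcyclicPath; infer_instance

instance (v : V) (k : ℕ) : DecidablePred (PassesThrough v (k := k)) :=
  fun _ => by unfold PassesThrough; infer_instance

omit [Fintype V] in
lemma isAcyclicPath_cons_iff {W D : Finset V} {j : V} (hj : j ∈ W \ D) {k : ℕ}
    (y : Fin (k + 1) → V) :
    IsAcyclicPath W D (Fin.cons j y : Fin (k + 2) → V) ↔ IsAcyclicPath (W.erase j) D y := by
  rw [mem_sdiff] at hj
  simp only [IsAcyclicPath, Fin.cons_injective_iff, ← Fin.succ_last, Fin.cons_succ]
  rw [Fin.forall_fin_succ]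
  simp only [Fin.cons_zero, Fin.cons_succ, Fin.val_succ, mem_sdiff, mem_erase, Set.mem_range,
    not_exists]
  -- `j ∉ range y`: the interior of `y` lies in `W.erase j` and its endpoint in `D ∌ j`
  grind [Fin.ext_iff]

omit [Fintype V] [DecidableEq V] in
lemma passesThrough_cons_iff {v j : V} (hjv : j ≠ v) {k : ℕ} (y : Fin (k + 1) → V) :
    PassesThrough v (Fin.cons j y : Fin (k + 2) → V) ↔ PassesThrough v y := by
  refine ⟨fun ⟨u, hu, huv⟩ => ?_, fun ⟨m, hm, hmv⟩ => ⟨m.succ, by simpa using hm, hmv⟩⟩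
  induction u using Fin.cases with
  | zero => exact absurd huv hjv
  | succ m => exact ⟨m, by simpa using hu, huv⟩

omit [Fintype V] in
lemma IsAcyclicPath.passesThrough_zero {W D : Finset V} {k : ℕ} {x : Fin (k + 1) → V}
    (hx : IsAcyclicPath W D x) (h0 : x 0 ∉ D) : PassesThrough (x 0) x := by
  rcases k with _ | k
  · exact absurd hx.2.2 h0
  · exact ⟨0, Nat.succ_pos k, rfl⟩

variable (w : V → V → ℝ)

noncomputable def pathTerm (W D : Finset V) (j : V) (k : ℕ) : ℝ :=
  ∑ x : Fin (k + 1) → V, if x 0 = j ∧ IsAcyclicPath W D x then pathWeight w x else 0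

noncomputable def viaTerm (W D : Finset V) (j v : V) (k : ℕ) : ℝ :=
  ∑ x : Fin (k + 1) → V,
    if x 0 = j ∧ IsAcyclicPath W D x ∧ PassesThrough v x then pathWeight w x else 0

omit [DecidableEq V] in
lemma sum_ite_eq_zero_of_injective {k : ℕ} (hk : Fintype.card V ≤ k)
    (P : (Fin (k + 1) → V) → Prop) [DecidablePred P] (hP : ∀ x, P x → Function.Injective x)
    (f : (Fin (k + 1) → V) → ℝ) : ∑ x, (if P x then f x else 0) = 0 :=
  sum_eq_zero fun x _ => if_neg fun h => by
    simpa using (Fintype.card_le_of_injective x (hP x h)).trans hk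

lemma cPath_eq_sum_range (W D : Finset V) (j : V) {N : ℕ} (hN : Fintype.card V ≤ N) :
    cPath w W D j = ∑ k ∈ range N, pathTerm w W D j k := by
  rw [cPath, tsum_eq_sum (s := range N)]
  · exact sum_congr rfl fun k _ => sum_congr rfl fun x _ => if_congr Iff.rfl rfl rfl
  · intro k hk
    exact sum_ite_eq_zero_of_injective (by simp at hk; omega) _ (fun x h => h.2.1) _

lemma cPathVia_eq_sum_range (W D : Finset V) (j v : V) {N : ℕ} (hN : Fintype.card V ≤ N) :
    cPathVia w W D j v = ∑ k ∈ range N, viaTerm w W D j v k := by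
  rw [cPathVia, tsum_eq_sum (s := range N)]
  · exact sum_congr rfl fun k _ => sum_congr rfl fun x _ =>
      if_congr (by simp only [IsAcyclicPath, PassesThrough, and_assoc]) rfl rfl
  · intro k hk
    exact sum_ite_eq_zero_of_injective (by simp at hk; omega) _ (fun x h => h.2.1) _

lemma pathTerm_zero (W D : Finset V) (j : V) : pathTerm w W D j 0 = if j ∈ D then 1 else 0 := by
  rw [pathTerm, ← (Equiv.funUnique (Fin 1) V).symm.sum_comp]
  simp [IsAcyclicPath, pathWeight, Function.injective_of_subsingleton, ite_and]

lemma viaTerm_zero (W D : Finset V) (j v : V) : viaTerm w W D j v 0 = 0 :=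
  sum_eq_zero fun _ _ => if_neg fun ⟨_, _, _, hu, _⟩ => Nat.not_lt_zero _ hu

variable {w}

lemma pathTerm_succ_of_notMem {W D : Finset V} {j : V} (hj : j ∉ W \ D) (k : ℕ) :
    pathTerm w W D j (k + 1) = 0 :=
  sum_eq_zero fun _ _ => if_neg fun ⟨h0, hx⟩ => hj (h0 ▸ hx.2.1 0 k.succ_pos)

lemma viaTerm_succ_of_notMem {W D : Finset V} {j : V} (hj : j ∉ W \ D) (v : V) (k : ℕ) :
    viaTerm w W D j v (k + 1) = 0 :=
  sum_eq_zero fun _ _ => if_neg fun ⟨h0, hx, _⟩ => hj (h0 ▸ hx.2.1 0 k.succ_pos)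

lemma pathTerm_succ {W D : Finset V} {j : V} (hj : j ∈ W \ D) (k : ℕ) :
    pathTerm w W D j (k + 1) = ∑ i, w i j * pathTerm w (W.erase j) D i k :=
  sum_ite_tuple_cons w j (fun x => x 0 = j ∧ IsAcyclicPath W D x) (IsAcyclicPath (W.erase j) D)
    fun i y => by
    rw [Fin.cons_zero]
    exact and_congr_right fun h => by subst h; exact isAcyclicPath_cons_iff hj y

lemma viaTerm_succ {W D : Finset V} {j v : V} (hj : j ∈ W \ D) (hjv : j ≠ v) (k : ℕ) :
    viaTerm w W D j v (k + 1) = ∑ i, w i j * viaTerm w (W.erase j) D i v k :=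
  sum_ite_tuple_cons w j (fun x => x 0 = j ∧ IsAcyclicPath W D x ∧ PassesThrough v x)
    (fun y => IsAcyclicPath (W.erase j) D y ∧ PassesThrough v y) fun i y => by
    rw [Fin.cons_zero]
    exact and_congr_right fun h => by
      subst h
      exact and_congr (isAcyclicPath_cons_iff hj y) (passesThrough_cons_iff hjv y)

lemma viaTerm_self {W D : Finset V} {v : V} (hv : v ∉ D) (k : ℕ) :
    viaTerm w W D v v k = pathTerm w W D v k :=
  sum_congr rfl fun _ _ => if_congr
    ⟨fun ⟨h0, hx, _⟩ => ⟨h0, hx⟩,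
      fun ⟨h0, hx⟩ => ⟨h0, hx, h0 ▸ hx.passesThrough_zero (h0 ▸ hv)⟩⟩ rfl rfl

lemma cPath_of_notMem_sdiff {W D : Finset V} {j : V} (hj : j ∉ W \ D) :
    cPath w W D j = if j ∈ D then 1 else 0 := by
  rw [cPath_eq_sum_range w W D j (Nat.le_succ _), sum_range_succ', pathTerm_zero,
    sum_eq_zero fun k _ => pathTerm_succ_of_notMem hj k, zero_add]

lemma cPath_of_mem_sdiff {W D : Finset V} {j : V} (hj : j ∈ W \ D) :
    cPath w W D j = ∑ i, w i j * cPath w (W.erase j) D i := by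
  rw [cPath_eq_sum_range w W D j (Nat.le_succ _), sum_range_succ', pathTerm_zero,
    if_neg (mem_sdiff.1 hj).2, add_zero]
  simp_rw [pathTerm_succ hj, cPath_eq_sum_range w _ D _ le_rfl, mul_sum]
  exact sum_comm

lemma cPathVia_of_notMem_sdiff {W D : Finset V} {j : V} (hj : j ∉ W \ D) (v : V) :
    cPathVia w W D j v = 0 := by
  rw [cPathVia_eq_sum_range w W D j v (Nat.le_succ _), sum_range_succ', viaTerm_zero,
    sum_eq_zero fun k _ => viaTerm_succ_of_notMem hj v k, zero_add]

lemma cPathVia_of_mem_sdiff {W D : Finset V} {j v : V} (hj : j ∈ W \ D) (hjv : j ≠ v) :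
    cPathVia w W D j v = ∑ i, w i j * cPathVia w (W.erase j) D i v := by
  rw [cPathVia_eq_sum_range w W D j v (Nat.le_succ _), sum_range_succ', viaTerm_zero, add_zero]
  simp_rw [viaTerm_succ hj hjv, cPathVia_eq_sum_range w _ D _ v le_rfl, mul_sum]
  exact sum_comm

lemma cPathVia_self {W D : Finset V} {v : V} (hv : v ∉ D) :
    cPathVia w W D v v = cPath w W D v := by
  simp_rw [cPathVia_eq_sum_range w W D v v le_rfl, cPath_eq_sum_range w W D v le_rfl,
    viaTerm_self hv]

lemma cPath_nonneg (hw0 : ∀ i j : V, 0 ≤ w i j) (W D : Finset V) (j : V) : 0 ≤ cPath w W D j :=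
  tsum_nonneg fun _ => sum_nonneg fun _ _ => by
    split_ifs
    exacts [pathWeight_nonneg hw0 _, le_rfl]

lemma cPath_le_one (hw0 : ∀ i j : V, 0 ≤ w i j) (hw1 : ∀ j : V, ∑ i ∈ univ.erase j, w i j ≤ 1)
    (W D : Finset V) (j : V) : cPath w W D j ≤ 1 := by
  induction W using Finset.strongInduction generalizing j with
  | H W ih =>
  by_cases hj : j ∈ W \ D
  · have hjj : cPath w (W.erase j) D j = 0 := by
      rw [cPath_of_notMem_sdiff (by simp), if_neg (mem_sdiff.1 hj).2]
    calc cPath w W D j = ∑ i ∈ univ.erase j, w i j * cPath w (W.erase j) D i := by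
          rw [cPath_of_mem_sdiff hj, ← add_sum_erase _ _ (mem_univ j), hjj, mul_zero, zero_add]
      _ ≤ ∑ i ∈ univ.erase j, w i j * 1 := by
          gcongr with i
          · exact hw0 i j
          · exact ih _ (erase_ssubset (mem_sdiff.1 hj).1) i
      _ ≤ 1 := by simpa using hw1 j
  · rw [cPath_of_notMem_sdiff hj]
    split_ifs <;> norm_num

lemma cPathVia_le_cPath_sdiff (hw0 : ∀ i j : V, 0 ≤ w i j)
    (hw1 : ∀ j : V, ∑ i ∈ univ.erase j, w i j ≤ 1) (W A : Finset V) (j v : V) :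
    cPathVia w W A j v ≤ cPath w (W \ A) {v} j := by
  induction W using Finset.strongInduction generalizing j with
  | H W ih =>
  by_cases hj : j ∈ W \ A
  · by_cases hjv : j = v
    · subst hjv
      have hstart : cPath w (W \ A) {j} j = 1 := by
        rw [cPath_of_notMem_sdiff (by simp), if_pos (mem_singleton_self j)]
      rw [cPathVia_self (mem_sdiff.1 hj).2, hstart]
      exact cPath_le_one hw0 hw1 W A j
    · have hj' : j ∈ (W \ A) \ {v} := by simp [mem_sdiff.1 hj, hjv]
      rw [cPathVia_of_mem_sdiff hj hjv, cPath_of_mem_sdiff hj', ← erase_sdiff_comm]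
      gcongr with i
      · exact hw0 i j
      · exact ih _ (erase_ssubset (mem_sdiff.1 hj).1) i
  · rw [cPathVia_of_notMem_sdiff hj]
    exact cPath_nonneg hw0 _ _ j

end AcyclicPath

theorem stmt7_general {V : Type*} [Fintype V] [DecidableEq V] (w : V → V → ℝ)
    (hw0 : ∀ i j : V, 0 ≤ w i j)
    (hw1 : ∀ j : V, ∑ i ∈ Finset.univ.erase j, w i j ≤ 1)
    (A : Finset V) (j v : V) :
    cPathVia w Finset.univ A j v ≤ cPath w (Finset.univ \ A) {v} j :=
  cPathVia_le_cPath_sdiff hw0 hw1 univ A j v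

theorem stmt7 {V : Type*} [Fintype V] [DecidableEq V] (w : V → V → ℝ)
    (hw0 : ∀ i j : V, 0 ≤ w i j)
    (hw1 : ∀ j : V, ∑ i ∈ Finset.univ.erase j, w i j ≤ 1)
    (A : Finset V) (j v : V) (hj : j ∉ A) (hv : v ∉ A) (hjv : j ≠ v) :
    cPathVia w Finset.univ A j v ≤ cPath w (Finset.univ \ A) {v} j :=
  stmt7_general w hw0 hw1 A j v
end

section
/- In the UILT model (the UISLT model with β_j = 1 for all j, so that ∑_{i ≠ j} α_i ≤ 1 for every j), for any A₀ ⊆ V with |A₀| = K and V \ A₀ = {j_1, …, j_k}, with α_{A₀} := ∑_{i ∈ A₀} α_i, the expected influence satisfies σ^(V, A₀) = K + k·α_{A₀} + α_{A₀} ∑_{m=1}^{k-1} (k − m) · f^m(α_{j_1}, …, α_{j_k}). -/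
/-!
With `w(i, j) = α i`, a simple path `j = x₀, x₁, …, x_{m+1}` from `j ∉ A` into `A` has weight
`α x₁ ⋯ α x_{m+1}`: its interior `x₁, …, x_m` is an ordered `m`-subset of `(V \ A) \ {j}` and its
endpoint is any node of `A`. Peeling off the first step and using
`f^{m+1}(T) = ∑_{a ∈ T} α a · f^m(T \ {a})` gives, by induction on `m`,
`c(j → A) = α_A ∑_m f^m((V \ A) \ {j})`. Summing over `j ∉ A`, every `m`-subset of `V \ A` is
counted once for each of the `k - m` nodes outside it, so
`∑_{j ∉ A} c(j → A) = α_A ∑_m (k - m) f^m(V \ A)`, while each node of `A` contributes `1`.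
-/

open Finset

section PowersetCard

variable {ι M : Type*} [DecidableEq ι] [AddCommMonoid M]

theorem Finset.sum_sum_powersetCard_erase (T : Finset ι) (m : ℕ) (f : Finset ι → M) :
    ∑ j ∈ T, ∑ S ∈ (T.erase j).powersetCard m, f S
      = (T.card - m) • ∑ S ∈ T.powersetCard m, f S := by
  have hmem : ∀ j S, j ∈ T ∧ S ∈ (T.erase j).powersetCard m ↔
      j ∈ T \ S ∧ S ∈ T.powersetCard m := by
    intro j S
    simp only [mem_powersetCard, subset_erase, mem_sdiff]
    tauto
  rw [sum_comm' hmem, smul_sum]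
  refine sum_congr rfl fun S hS => ?_
  obtain ⟨hST, hcard⟩ := mem_powersetCard.1 hS
  rw [sum_const, card_sdiff_of_subset hST, hcard]

theorem Finset.sum_sum_powersetCard_erase_insert (T : Finset ι) (m : ℕ) (f : Finset ι → M) :
    ∑ a ∈ T, ∑ S ∈ (T.erase a).powersetCard m, f (insert a S)
      = (m + 1) • ∑ S ∈ T.powersetCard (m + 1), f S := by
  have hinsert : ∀ a ∈ T, ∑ S ∈ (T.erase a).powersetCard m, f (insert a S)
      = ∑ S ∈ (T.powersetCard (m + 1)).filter (a ∈ ·), f S := by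
    intro a ha
    refine sum_nbij' (insert a) (erase · a) ?_ ?_ ?_ ?_ fun _ _ => rfl
    all_goals intro S hS
    all_goals simp only [mem_filter, mem_powersetCard, subset_erase] at hS ⊢
    · have haS : a ∉ S := hS.1.2
      exact ⟨⟨insert_subset ha hS.1.1, by rw [card_insert_of_notMem haS, hS.2]⟩, mem_insert_self a S⟩
    · refine ⟨⟨(erase_subset a S).trans hS.1.1, notMem_erase a S⟩, ?_⟩
      rw [card_erase_of_mem hS.2, hS.1.2, Nat.add_sub_cancel]
    · exact erase_insert hS.1.2
    · exact insert_erase hS.2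
  have hmem : ∀ a S, a ∈ T ∧ S ∈ (T.powersetCard (m + 1)).filter (a ∈ ·) ↔
      a ∈ S ∧ S ∈ T.powersetCard (m + 1) := by
    intro a S
    simp only [mem_filter, mem_powersetCard]
    constructor
    · tauto
    · exact fun ⟨haS, hST, hc⟩ => ⟨hST haS, ⟨hST, hc⟩, haS⟩
  rw [sum_congr rfl hinsert, sum_comm' hmem, smul_sum]
  refine sum_congr rfl fun S hS => ?_
  rw [sum_const, (mem_powersetCard.1 hS).2]

end PowersetCard

section fPoly

variable {ι : Type*} [DecidableEq ι] (x : ι → ℝ)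

theorem fPoly_zero (T : Finset ι) : fPoly 0 T x = 1 := by
  simp [fPoly]

theorem fPoly_eq_zero_of_card_lt {m : ℕ} {T : Finset ι} (h : T.card < m) : fPoly m T x = 0 := by
  simp [fPoly, powersetCard_eq_empty.2 h]

theorem fPoly_map {κ : Type*} [DecidableEq κ] (m : ℕ) (T : Finset κ) (f : κ ↪ ι) :
    fPoly m (T.map f) x = fPoly m T (x ∘ f) := by
  simp only [fPoly, powersetCard_map, sum_map, RelEmbedding.coe_toEmbedding, mapEmbedding_apply,
    prod_map, Function.comp_apply]

theorem sum_mul_fPoly_erase (m : ℕ) (T : Finset ι) :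
    ∑ a ∈ T, x a * fPoly m (T.erase a) x = fPoly (m + 1) T x := by
  have hsum := sum_sum_powersetCard_erase_insert T m fun S => ∏ s ∈ S, x s
  have hprod : ∀ a ∈ T, ∀ S ∈ (T.erase a).powersetCard m,
      ∏ s ∈ insert a S, x s = x a * ∏ s ∈ S, x s := fun a _ S hS =>
    prod_insert (subset_erase.1 (mem_powersetCard.1 hS).1).2
  simp only [sum_congr rfl fun a ha => sum_congr rfl (hprod a ha), ← mul_sum, nsmul_eq_mul] at hsum
  simp only [fPoly, mul_left_comm (x _), ← mul_sum, hsum, Nat.factorial_succ]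
  push_cast
  ring

theorem sum_fPoly_erase (m : ℕ) (T : Finset ι) :
    ∑ j ∈ T, fPoly m (T.erase j) x = ((T.card : ℝ) - m) * fPoly m T x := by
  rcases le_or_gt m T.card with hm | hm
  · simp only [fPoly, ← mul_sum, sum_sum_powersetCard_erase, nsmul_eq_mul, Nat.cast_sub hm]
    ring
  · rw [fPoly_eq_zero_of_card_lt x hm, mul_zero]
    exact sum_eq_zero fun j _ => fPoly_eq_zero_of_card_lt x ((card_erase_le).trans_lt hm)

end fPoly

section Walks

variable {V : Type*}

theorem Fintype.sum_fin_succ_pi [Fintype V] {M : Type*} [AddCommMonoid M] {k : ℕ}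
    (f : (Fin (k + 1) → V) → M) : ∑ x, f x = ∑ a, ∑ y : Fin k → V, f (Fin.cons a y) := by
  rw [← (Fin.consEquiv fun _ => V).sum_comp, Fintype.sum_prod_type]
  rfl

variable [DecidableEq V]

def IsSimplePath (T A : Finset V) {k : ℕ} (x : Fin (k + 1) → V) : Prop :=
  Function.Injective x ∧ (∀ m : Fin (k + 1), (m : ℕ) < k → x m ∈ T) ∧ x (Fin.last k) ∈ A

instance (T A : Finset V) (k : ℕ) : DecidablePred (IsSimplePath T A (k := k)) :=
  fun _ => inferInstanceAs (Decidable (_ ∧ _))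

theorem isSimplePath_cons_iff {T A : Finset V} (hTA : Disjoint T A) {j : V} {m : ℕ}
    (y : Fin (m + 1) → V) :
    IsSimplePath T A (Fin.cons j y : Fin (m + 2) → V) ↔ j ∈ T ∧ IsSimplePath (T.erase j) A y := by
  have hlast : (Fin.cons j y : Fin (m + 2) → V) (Fin.last (m + 1)) = y (Fin.last m) := by
    rw [← Fin.succ_last, Fin.cons_succ]
  rw [IsSimplePath, IsSimplePath, hlast, Fin.cons_injective_iff, Fin.forall_fin_succ]
  simp only [Fin.cons_zero, Fin.cons_succ, Fin.val_zero, Fin.val_succ, Nat.succ_pos, true_implies,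
    Nat.add_lt_add_iff_right, mem_erase]
  constructor
  · rintro ⟨⟨hjy, hinj⟩, ⟨hjT, hT⟩, hA⟩
    exact ⟨hjT, hinj, fun i hi => ⟨fun h => hjy ⟨i, h⟩, hT i hi⟩, hA⟩
  · rintro ⟨hjT, hinj, hT, hA⟩
    refine ⟨⟨?_, hinj⟩, ⟨hjT, fun i hi => (hT i hi).2⟩, hA⟩
    rintro ⟨i, rfl⟩
    rcases (Nat.lt_succ_iff.1 i.isLt).lt_or_eq with hi | hi
    · exact (hT i hi).1 rfl
    · exact disjoint_left.1 hTA hjT (by rwa [show i = Fin.last m from Fin.ext hi])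

variable [Fintype V]

noncomputable def walkSum (α : V → ℝ) (T A : Finset V) (j : V) (k : ℕ) : ℝ :=
  ∑ x : Fin (k + 1) → V, if x 0 = j ∧ IsSimplePath T A x then ∏ i : Fin k, α (x i.succ) else 0

theorem cPath_eq_tsum_walkSum (α : V → ℝ) (A : Finset V) (j : V) :
    cPath (fun i _ => α i) univ A j = ∑' k, walkSum α (univ \ A) A j k := rfl

theorem walkSum_zero (α : V → ℝ) (T A : Finset V) (j : V) :
    walkSum α T A j 0 = if j ∈ A then 1 else 0 := by
  rw [walkSum, Fintype.sum_fin_succ_pi]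
  simp [IsSimplePath, Function.injective_of_subsingleton, ite_and]

theorem walkSum_succ (α : V → ℝ) {T A : Finset V} (hTA : Disjoint T A) (j : V) (m : ℕ) :
    walkSum α T A j (m + 1) = if j ∈ T then ∑ a, α a * walkSum α (T.erase j) A a m else 0 := by
  rw [walkSum, Fintype.sum_fin_succ_pi, Fintype.sum_eq_single j]
  · simp only [Fin.cons_zero, true_and, isSimplePath_cons_iff hTA, Fin.cons_succ, ite_and]
    split_ifs with hjT
    · simp only [walkSum, mul_sum, mul_ite, mul_zero]
      rw [sum_comm]
      refine sum_congr rfl fun y _ => ?_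
      simp only [ite_and, sum_ite_eq, mem_univ, if_true, Fin.prod_univ_succ]
    · simp
  · intro b hb
    simp [hb]

theorem walkSum_succ_eq (α : V → ℝ) {T A : Finset V} (hTA : Disjoint T A) (j : V) (m : ℕ) :
    walkSum α T A j (m + 1) = if j ∈ T then (∑ a ∈ A, α a) * fPoly m (T.erase j) α else 0 := by
  induction m generalizing T j with
  | zero => simp [walkSum_succ α hTA, walkSum_zero, fPoly_zero, mul_ite, sum_ite_mem]
  | succ m ih =>
    rw [walkSum_succ α hTA]
    split_ifs with hjT
    · have hTA' : Disjoint (T.erase j) A := disjoint_of_subset_left (erase_subset j T) hTA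
      simp only [ih hTA', mul_ite, mul_zero, sum_ite_mem, univ_inter, mul_left_comm (α _),
        ← mul_sum, sum_mul_fPoly_erase]
    · rfl

end Walks

theorem Finset.sum_range_eq_add_sum_Icc {M : Type*} [AddCommMonoid M] (f : ℕ → M) {k : ℕ}
    (hk : 0 < k) : ∑ m ∈ range k, f m = f 0 + ∑ m ∈ Icc 1 (k - 1), f m := by
  rw [range_eq_Ico, sum_eq_sum_Ico_succ_bot hk,
    Icc_sub_one_right_eq_Ico_of_not_isMin (by simpa using hk.ne')]

section Influence

variable {V : Type*} [Fintype V] [DecidableEq V] (α : V → ℝ) {A : Finset V}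

theorem cPath_of_mem {j : V} (hj : j ∈ A) : cPath (fun i _ => α i) univ A j = 1 := by
  rw [cPath_eq_tsum_walkSum, tsum_eq_single 0, walkSum_zero, if_pos hj]
  rintro (_ | m) hm
  · exact absurd rfl hm
  · rw [walkSum_succ_eq α sdiff_disjoint, if_neg fun h => (mem_sdiff.1 h).2 hj]

theorem cPath_of_notMem_s15 {j : V} (hj : j ∉ A) :
    cPath (fun i _ => α i) univ A j
      = (∑ a ∈ A, α a) * ∑ m ∈ range (univ \ A).card, fPoly m ((univ \ A).erase j) α := by
  have hjT : j ∈ univ \ A := mem_sdiff.2 ⟨mem_univ j, hj⟩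
  rw [cPath_eq_tsum_walkSum, tsum_eq_sum (s := range ((univ \ A).card + 1)), sum_range_succ',
    walkSum_zero, if_neg hj, add_zero, mul_sum]
  · simp only [walkSum_succ_eq α sdiff_disjoint, if_pos hjT]
  · rintro (_ | m) hm
    · simp at hm
    · rw [walkSum_succ_eq α sdiff_disjoint, if_pos hjT, fPoly_eq_zero_of_card_lt, mul_zero]
      have hTpos : 0 < (univ \ A).card := card_pos.2 ⟨j, hjT⟩
      rw [card_erase_of_mem hjT]
      simp only [mem_range, not_lt] at hm
      omega

theorem sigmaInfl_eq :
    sigmaInfl (fun i _ => α i) univ A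
      = A.card + (∑ a ∈ A, α a) *
          ∑ m ∈ range (univ \ A).card, (((univ \ A).card : ℝ) - m) * fPoly m (univ \ A) α := by
  rw [sigmaInfl, ← sum_sdiff (subset_univ A), add_comm, sum_congr rfl fun j hj => cPath_of_mem α hj,
    sum_congr rfl fun j hj => cPath_of_notMem_s15 α (mem_sdiff.1 hj).2, ← mul_sum, sum_comm, sum_const,
    nsmul_one]
  simp only [sum_fPoly_erase]

end Influence

theorem stmt15_general (n K k : ℕ) (α : Fin n → ℝ)
    (A₀ : Finset (Fin n)) (hK : A₀.card = K)
    (jf : Fin k → Fin n) (hjf : Function.Injective jf)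
    (hjfim : Finset.image jf Finset.univ = Finset.univ \ A₀) :
    sigmaInfl (fun i _ => α i) Finset.univ A₀
      = (K : ℝ) + (k : ℝ) * (∑ i ∈ A₀, α i)
        + (∑ i ∈ A₀, α i) *
            ∑ m ∈ Finset.Icc 1 (k - 1),
              ((k : ℝ) - (m : ℝ)) *
                fPoly m (Finset.univ : Finset (Fin k)) (fun l => α (jf l)) := by
  have hmap : univ.map ⟨jf, hjf⟩ = univ \ A₀ := by rw [map_eq_image]; exact hjfim
  have hcard : (univ \ A₀).card = k := by rw [← hmap, card_map, card_univ, Fintype.card_fin]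
  rw [sigmaInfl_eq, hK, hcard, ← hmap]
  simp only [fPoly_map]
  rcases Nat.eq_zero_or_pos k with rfl | hk
  · simp
  · rw [sum_range_eq_add_sum_Icc _ hk, fPoly_zero]
    simp only [Function.Embedding.coeFn_mk, Function.comp_def]
    ring

theorem stmt15 (n K k : ℕ) (α : Fin n → ℝ) (hα : ∀ i, 0 ≤ α i)
    (hsum : ∀ j : Fin n, ∑ i ∈ Finset.univ.erase j, α i ≤ 1)
    (A₀ : Finset (Fin n)) (hK : A₀.card = K) (hk : k = n - K)
    (jf : Fin k → Fin n) (hjf : Function.Injective jf)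
    (hjfim : Finset.image jf Finset.univ = Finset.univ \ A₀) :
    sigmaInfl (fun i _ => α i) Finset.univ A₀
      = (K : ℝ) + (k : ℝ) * (∑ i ∈ A₀, α i)
        + (∑ i ∈ A₀, α i) *
            ∑ m ∈ Finset.Icc 1 (k - 1),
              ((k : ℝ) - (m : ℝ)) *
                fPoly m (Finset.univ : Finset (Fin k)) (fun l => α (jf l)) :=
  stmt15_general n K k α A₀ hK jf hjf hjfim
end

section
/- In the USLT model, where w(i,j) := β_j for all i ≠ j with β_j > 0 and (n−1)β_j ≤ 1 for every j, the probability vector π defined by π_i := (1/β_i) / (∑_{j ∈ V} 1/β_j) is a stationary distribution of the PageRank transition matrix P, i.e. π_i = ∑_{j ∈ V} π_j · P(j,i) for every i ∈ V. -/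
open Finset

/-!
A chain in detailed balance with `π` leaves `π` invariant. Here `π i * P i j = π i * β i` for
`i ≠ j`, and `π i * β i = 1 / ∑ j, 1 / β j` does not depend on `i`, so detailed balance holds.
-/

theorem sum_mul_eq_of_detailedBalance {ι R : Type*} [Fintype ι] [CommSemiring R]
    (P : ι → ι → R) (π : ι → R) (hrow : ∀ j, ∑ i, P j i = 1)
    (hdb : ∀ i j, π i * P i j = π j * P j i) (i : ι) :
    ∑ j, π j * P j i = π i :=
  calc ∑ j, π j * P j i = ∑ j, π i * P i j := Finset.sum_congr rfl fun j _ => (hdb i j).symm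
    _ = π i := by rw [← Finset.mul_sum, hrow, mul_one]

theorem Finset.sum_eq_one_of_eq_one_sub_sum_erase {ι R : Type*} [Fintype ι] [DecidableEq ι]
    [AddCommGroup R] [One R] (f : ι → R) (j : ι)
    (h : f j = 1 - ∑ i ∈ Finset.univ.erase j, f i) : ∑ i, f i = 1 := by
  rw [← Finset.add_sum_erase _ _ (Finset.mem_univ j), h, sub_add_cancel]

theorem detailedBalance_of_offDiag_eq {ι R : Type*} [CommSemiring R]
    (w : ι → ι → R) (β π : ι → R) (c : R) (hw : ∀ i j, i ≠ j → w i j = β j)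
    (hc : ∀ i, π i * β i = c) (i j : ι) :
    π i * w j i = π j * w i j := by
  rcases eq_or_ne i j with rfl | hij
  · rfl
  · rw [hw j i hij.symm, hw i j hij, hc, hc]

theorem stmt16_general (n : ℕ) (β : Fin n → ℝ) (hβ : ∀ j, 0 < β j)
    (w : Fin n → Fin n → ℝ)
    (hw : ∀ i j : Fin n, i ≠ j → w i j = β j)
    (hwd : ∀ j : Fin n, w j j = 1 - ∑ i ∈ Finset.univ.erase j, w i j)
    (P : Fin n → Fin n → ℝ) (hP : ∀ j i : Fin n, P j i = w i j)
    (pr : Fin n → ℝ) (hpr : ∀ i, pr i = (1 / β i) / ∑ j, 1 / β j) :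
    ∀ i, pr i = ∑ j, pr j * P j i := by
  have hrow (j : Fin n) : ∑ i, P j i = 1 := by
    simp only [hP]
    exact Finset.sum_eq_one_of_eq_one_sub_sum_erase (w · j) j (hwd j)
  have hconst (i : Fin n) : pr i * β i = 1 / ∑ j, 1 / β j := by
    rw [hpr i]
    field_simp [(hβ i).ne']
  have hdb (i j : Fin n) : pr i * P i j = pr j * P j i := by
    simp only [hP]
    exact detailedBalance_of_offDiag_eq w β pr _ hw hconst i j
  exact fun i => (sum_mul_eq_of_detailedBalance P pr hrow hdb i).symm

theorem stmt16 (n : ℕ) (hn : 2 ≤ n) (β : Fin n → ℝ) (hβ : ∀ j, 0 < β j)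
    (hsum : ∀ j : Fin n, ((n : ℝ) - 1) * β j ≤ 1)
    (w : Fin n → Fin n → ℝ)
    (hw : ∀ i j : Fin n, i ≠ j → w i j = β j)
    (hwd : ∀ j : Fin n, w j j = 1 - ∑ i ∈ Finset.univ.erase j, w i j)
    (P : Fin n → Fin n → ℝ) (hP : ∀ j i : Fin n, P j i = w i j)
    (pr : Fin n → ℝ) (hpr : ∀ i, pr i = (1 / β i) / ∑ j, 1 / β j) :
    ∀ i, pr i = ∑ j, pr j * P j i :=
  stmt16_general n β hβ w hw hwd P hP pr hpr
end

section
/- In the UILT model, where w(i,j) := α_i for all i ≠ j with α_i ≥ 0, ∑_{i ≠ j} α_i ≤ 1 for every j, and ∑_{j ∈ V} α_j > 0, the probability vector π defined by π_i := α_i / (∑_{j ∈ V} α_j) is a stationary distribution of the PageRank transition matrix P, i.e. π_i = ∑_{j ∈ V} π_j · P(j,i) for every i ∈ V. -/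
open Finset

section UniformInfluence

variable {ι : Type*} [Fintype ι] [DecidableEq ι] {α : ι → ℝ} {w : ι → ι → ℝ}

theorem diag_eq_one_sub_sum_erase (hw : ∀ i j, i ≠ j → w i j = α i)
    (hwd : ∀ j, w j j = 1 - ∑ i ∈ univ.erase j, w i j) (j : ι) :
    w j j = 1 - ∑ i ∈ univ.erase j, α i := by
  rw [hwd j, sum_congr rfl fun i hi => hw i j (ne_of_mem_erase hi)]

/-- The diagonal deficit `α i * ∑ k ≠ i, α k` is exactly the inflow `∑ j ≠ i, α j * α i`. -/
theorem sum_mul_eq_of_uniform_influence (hw : ∀ i j, i ≠ j → w i j = α i)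
    (hwd : ∀ j, w j j = 1 - ∑ i ∈ univ.erase j, w i j) (i : ι) :
    ∑ j, α j * w i j = α i := by
  have hoff : ∑ j ∈ univ.erase i, α j * w i j = (∑ j ∈ univ.erase i, α j) * α i := by
    rw [sum_mul]
    exact sum_congr rfl fun j hj => by rw [hw i j (ne_of_mem_erase hj).symm]
  rw [← add_sum_erase _ _ (mem_univ i), hoff, diag_eq_one_sub_sum_erase hw hwd i]
  ring

end UniformInfluence

theorem stmt17_general (n : ℕ) (α : Fin n → ℝ)
    (w : Fin n → Fin n → ℝ)
    (hw : ∀ i j : Fin n, i ≠ j → w i j = α i)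
    (hwd : ∀ j : Fin n, w j j = 1 - ∑ i ∈ Finset.univ.erase j, w i j)
    (P : Fin n → Fin n → ℝ) (hP : ∀ j i : Fin n, P j i = w i j)
    (pr : Fin n → ℝ) (hpr : ∀ i, pr i = α i / ∑ j, α j) :
    ∀ i, pr i = ∑ j, pr j * P j i := by
  intro i
  simp only [hpr, hP, div_mul_eq_mul_div, ← sum_div]
  rw [sum_mul_eq_of_uniform_influence hw hwd i]

theorem stmt17 (n : ℕ) (hn : 2 ≤ n) (α : Fin n → ℝ) (hα : ∀ i, 0 ≤ α i)
    (hsum : ∀ j : Fin n, ∑ i ∈ Finset.univ.erase j, α i ≤ 1)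
    (hpos : 0 < ∑ j, α j)
    (w : Fin n → Fin n → ℝ)
    (hw : ∀ i j : Fin n, i ≠ j → w i j = α i)
    (hwd : ∀ j : Fin n, w j j = 1 - ∑ i ∈ Finset.univ.erase j, w i j)
    (P : Fin n → Fin n → ℝ) (hP : ∀ j i : Fin n, P j i = w i j)
    (pr : Fin n → ℝ) (hpr : ∀ i, pr i = α i / ∑ j, α j) :
    ∀ i, pr i = ∑ j, pr j * P j i :=
  stmt17_general n α w hw hwd P hP pr hpr
end

section
/- In the UISLT model, where w(i,j) := α_i β_j for all i ≠ j with α_i ≥ 0, β_i > 0, β_j ∑_{i ≠ j} α_i ≤ 1 for every j, and ∑_{j ∈ V} α_j/β_j > 0, the probability vector π defined by π_i := (α_i/β_i) / (∑_{j ∈ V} α_j/β_j) is a stationary distribution of the PageRank transition matrix P, i.e. π_i = ∑_{j ∈ V} π_j · P(j,i) for every i ∈ V. -/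
/-
The unnormalised weights `α i / β i` are in detailed balance with the chain:
for `i ≠ j` both `(α j / β j) P(j,i)` and `(α i / β i) P(i,j)` equal `α i α j`.
Detailed balance together with row-stochasticity gives stationarity, and
normalising by `∑ j, α j / β j` preserves it.
-/

open Finset

theorem sum_mul_eq_of_detailed_balance {ι K : Type*} [Fintype ι] [CommSemiring K]
    (P : ι → ι → K) (hP : ∀ i, ∑ j, P i j = 1) (π : ι → K)
    (hbal : ∀ i j, π j * P j i = π i * P i j) (i : ι) :
    ∑ j, π j * P j i = π i := by
  simp_rw [hbal i, ← mul_sum, hP, mul_one]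

theorem sum_eq_one_of_diag_eq_one_sub {ι K : Type*} [Fintype ι] [DecidableEq ι] [Ring K]
    (w : ι → ι → K) (hwd : ∀ j, w j j = 1 - ∑ i ∈ univ.erase j, w i j) (j : ι) :
    ∑ i, w i j = 1 := by
  rw [← add_sum_erase _ _ (mem_univ j), hwd, sub_add_cancel]

theorem div_mul_eq_of_rankOne_offDiag {ι K : Type*} [Field K] (α β : ι → K)
    (hβ : ∀ i, β i ≠ 0) (w : ι → ι → K) (hw : ∀ i j, i ≠ j → w i j = α i * β j)
    (i j : ι) : α j / β j * w i j = α i / β i * w j i := by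
  obtain rfl | hij := eq_or_ne i j
  · rfl
  rw [hw i j hij, hw j i hij.symm]
  field_simp [hβ i, hβ j]

theorem stmt18_general (n : ℕ) (α β : Fin n → ℝ)
    (hβ : ∀ i, 0 < β i)
    (w : Fin n → Fin n → ℝ)
    (hw : ∀ i j : Fin n, i ≠ j → w i j = α i * β j)
    (hwd : ∀ j : Fin n, w j j = 1 - ∑ i ∈ Finset.univ.erase j, w i j)
    (P : Fin n → Fin n → ℝ) (hP : ∀ j i : Fin n, P j i = w i j)
    (pr : Fin n → ℝ) (hpr : ∀ i, pr i = (α i / β i) / ∑ j, α j / β j) :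
    ∀ i, pr i = ∑ j, pr j * P j i := by
  intro i
  refine (sum_mul_eq_of_detailed_balance P (fun i ↦ ?_) pr (fun i j ↦ ?_) i).symm
  · simpa only [hP] using sum_eq_one_of_diag_eq_one_sub w hwd i
  · simp only [hP, hpr, div_mul_eq_mul_div _ (∑ j, α j / β j)]
    rw [div_mul_eq_of_rankOne_offDiag α β (fun i ↦ (hβ i).ne') w hw i j]

theorem stmt18 (n : ℕ) (hn : 2 ≤ n) (α β : Fin n → ℝ)
    (hα : ∀ i, 0 ≤ α i) (hβ : ∀ i, 0 < β i)
    (hsum : ∀ j : Fin n, β j * ∑ i ∈ Finset.univ.erase j, α i ≤ 1)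
    (hpos : 0 < ∑ j, α j / β j)
    (w : Fin n → Fin n → ℝ)
    (hw : ∀ i j : Fin n, i ≠ j → w i j = α i * β j)
    (hwd : ∀ j : Fin n, w j j = 1 - ∑ i ∈ Finset.univ.erase j, w i j)
    (P : Fin n → Fin n → ℝ) (hP : ∀ j i : Fin n, P j i = w i j)
    (pr : Fin n → ℝ) (hpr : ∀ i, pr i = (α i / β i) / ∑ j, α j / β j) :
    ∀ i, pr i = ∑ j, pr j * P j i :=
  stmt18_general n α β hβ w hw hwd P hP pr hpr
end

section
/- Let G be a finite simple undirected graph on vertex set V that is acyclic (a forest) and has no isolated vertices, with adjacency matrix a and vertex degrees d_j := ∑_{i} a(i,j) ≥ 1, and define the degree-based influence weights w(i,j) := a(i,j)/d_j (so ∑_{i ≠ j} w(i,j) = 1 for every j). Then for every node i ∈ V, the expected influence of the singleton initial set {i} equals its degree plus one: σ^(V,{i}) = d_i + 1. -/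
open Finset

/-! In a forest, a vertex `j` from which `i` is reachable has a unique path to `i`, and
`c(j → {i})` is the product of `1 / d` over the vertices of this path other than `i`; every other
term of the defining series vanishes, as does `c(j → {i})` for `j` outside the component of `i`.
If `t j` is the neighbour of `j` on its path, this reads `d j * c(j) = c(t j)`. Each vertex `v` of
the component has `d v - 1` preimages under `t` (`d i` if `v = i`), so summing `d j * c(j)` over
`j ≠ i` and regrouping by `t j` gives `∑_{j ≠ i} c(j) = d i`. -/

theorem sum_erase_eq_mul_of_card_fiber {ι : Type*} [DecidableEq ι] {R : Finset ι} {i : ι}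
    {parent : ι → ι} {d : ι → ℕ} {f : ι → ℝ} (hi : i ∈ R)
    (hmaps : ∀ j ∈ R.erase i, parent j ∈ R)
    (hcard : ∀ v ∈ R, #{j ∈ R.erase i | parent j = v} + (if v = i then 0 else 1) = d v)
    (hf : ∀ j ∈ R.erase i, d j * f j = f (parent j)) :
    ∑ j ∈ R.erase i, f j = d i * f i := by
  have hfiber : ∑ j ∈ R.erase i, (d j : ℝ) * f j =
      ∑ v ∈ R, (#{j ∈ R.erase i | parent j = v} : ℝ) * f v := by
    rw [sum_congr rfl hf, ← sum_fiberwise_of_maps_to hmaps]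
    refine sum_congr rfl fun v _ => ?_
    rw [sum_congr rfl fun j hj => by rw [(mem_filter.1 hj).2], sum_const, nsmul_eq_mul]
  have hroot : ∑ v ∈ R, (#{j ∈ R.erase i | parent j = v} : ℝ) * f v =
      d i * f i + ∑ v ∈ R.erase i, ((d v : ℝ) - 1) * f v := by
    rw [← add_sum_erase R _ hi]
    congr 1
    · rw [← hcard i hi, if_pos rfl, add_zero]
    · refine sum_congr rfl fun v hv => ?_
      rw [← hcard v (mem_of_mem_erase hv), if_neg (ne_of_mem_erase hv)]
      push_cast
      ring
  have hsub : ∑ v ∈ R.erase i, ((d v : ℝ) - 1) * f v =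
      ∑ j ∈ R.erase i, (d j : ℝ) * f j - ∑ j ∈ R.erase i, f j := by
    rw [← sum_sub_distrib]
    exact sum_congr rfl fun _ _ => by ring
  linarith

namespace SimpleGraph

variable {V : Type*} {G : SimpleGraph V} {i j u v : V}

namespace Walk

def ofFn {k : ℕ} (x : Fin (k + 1) → V) (hx : ∀ m : Fin k, G.Adj (x m.castSucc) (x m.succ)) :
    G.Walk (x 0) (x (Fin.last k)) :=
  (ofSupport (List.ofFn x) (by simp)
    (List.isChain_ofFn.2 fun m hm => hx ⟨m, by omega⟩)).copy (by simp) (List.getLast_ofFn_succ x)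

@[simp]
lemma support_ofFn {k : ℕ} (x : Fin (k + 1) → V)
    (hx : ∀ m : Fin k, G.Adj (x m.castSucc) (x m.succ)) : (ofFn x hx).support = List.ofFn x := by
  simp [ofFn]

lemma support_eq_ofFn_getVert (p : G.Walk u v) :
    p.support = List.ofFn fun m : Fin (p.length + 1) => p.getVert m := by
  refine List.ext_getElem (by simp) fun m h₁ _ => ?_
  rw [List.getElem_ofFn, p.getVert_eq_support_getElem (by simp at h₁; omega)]

end Walk

lemma IsAcyclic.support_eq_ofFn (hG : G.IsAcyclic) {p : G.Walk u v} (hp : p.IsPath) {k : ℕ}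
    {x : Fin (k + 1) → V} (hx : ∀ m : Fin k, G.Adj (x m.castSucc) (x m.succ))
    (hinj : Function.Injective x) (h₀ : x 0 = u) (hk : x (Fin.last k) = v) :
    p.support = List.ofFn x := by
  have hq : ((Walk.ofFn x hx).copy h₀ hk).IsPath := by
    rw [Walk.isPath_copy, Walk.isPath_def, Walk.support_ofFn]
    exact List.nodup_ofFn.2 hinj
  obtain rfl : p = (Walk.ofFn x hx).copy h₀ hk :=
    congrArg Subtype.val ((hG.subsingleton_path u v).elim ⟨p, hp⟩ ⟨_, hq⟩)
  simp

section cPath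

variable {w : V → V → ℝ}

lemma adj_of_prod_ne_zero (hw : ∀ ⦃a b⦄, w a b ≠ 0 → G.Adj a b) {k : ℕ} {x : Fin (k + 1) → V}
    (h : ∏ m : Fin k, w (x m.succ) (x m.castSucc) ≠ 0) (m : Fin k) :
    G.Adj (x m.castSucc) (x m.succ) :=
  (hw fun h₀ => h (prod_eq_zero (mem_univ m) h₀)).symm

variable [Fintype V] [DecidableEq V]

lemma cPath_univ_singleton_of_not_reachable (hw : ∀ ⦃a b⦄, w a b ≠ 0 → G.Adj a b)
    (h : ¬G.Reachable j i) : cPath w univ {i} j = 0 := by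
  unfold cPath
  refine (tsum_congr fun k => sum_eq_zero fun x _ => ?_).trans tsum_zero
  split_ifs with hx
  · by_contra hprod
    obtain ⟨h₀, -, -, hk⟩ := hx
    exact h ⟨(Walk.ofFn x (adj_of_prod_ne_zero hw hprod)).copy h₀ (mem_singleton.1 hk)⟩
  · rfl

theorem IsAcyclic.cPath_univ_singleton (hG : G.IsAcyclic) (hw : ∀ ⦃a b⦄, w a b ≠ 0 → G.Adj a b)
    {p : G.Walk j i} (hp : p.IsPath) :
    cPath w univ {i} j = ∏ m : Fin p.length, w (p.getVert (m + 1)) (p.getVert m) := by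
  set x₀ : Fin (p.length + 1) → V := fun m => p.getVert m
  have hx₀ : Function.Injective x₀ := fun a b hab =>
    Fin.ext (hp.getVert_injOn (by simp; omega) (by simp; omega) hab)
  -- a nonzero term of the series is an injective walk from `j` to `i`, hence `p` itself
  have hterm : ∀ (k : ℕ) (x : Fin (k + 1) → V), x 0 = j → Function.Injective x →
      x (Fin.last k) = i → ∏ m : Fin k, w (x m.succ) (x m.castSucc) ≠ 0 →
      List.ofFn x = List.ofFn x₀ := fun k x h₀ hinj hk hprod => by
    rw [← hG.support_eq_ofFn hp (adj_of_prod_ne_zero hw hprod) hinj h₀ hk,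
      Walk.support_eq_ofFn_getVert]
  unfold cPath
  rw [tsum_eq_single p.length, sum_eq_single x₀]
  · rw [if_pos]
    · rfl
    refine ⟨p.getVert_zero, hx₀, fun m hm => ?_, by simp [x₀]⟩
    simp only [mem_sdiff, mem_univ, mem_singleton, true_and]
    intro hmi
    have := hx₀ (a₁ := m) (a₂ := Fin.last _) (by simpa [x₀] using hmi)
    simp [this] at hm
  · intro x _ hx
    split_ifs with hc
    · by_contra hprod
      exact hx (List.ofFn_injective (hterm _ x hc.1 hc.2.1 (mem_singleton.1 hc.2.2.2) hprod))
    · rfl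
  · simp
  · intro k hk
    refine sum_eq_zero fun x _ => ?_
    split_ifs with hc
    · by_contra hprod
      have := congrArg List.length (hterm k x hc.1 hc.2.1 (mem_singleton.1 hc.2.2.2) hprod)
      exact hk (by simpa using this)
    · rfl

end cPath

section Towards

open Classical in
/-- The neighbour of `j` on the path from `j` to `i`; junk value `j` if `i` is unreachable. -/
noncomputable def towards (G : SimpleGraph V) (i j : V) : V :=
  if h : G.Reachable j i then h.exists_isPath.choose.snd else j

lemma IsAcyclic.towards_eq (hG : G.IsAcyclic) {p : G.Walk j i} (hp : p.IsPath) :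
    G.towards i j = p.snd := by
  have h : G.Reachable j i := ⟨p⟩
  rw [towards, dif_pos h]
  exact congrArg (fun q : G.Path j i => q.1.snd)
    ((hG.subsingleton_path j i).elim ⟨_, h.exists_isPath.choose_spec⟩ ⟨p, hp⟩)

lemma Reachable.adj_towards (h : G.Reachable j i) (hji : j ≠ i) : G.Adj j (G.towards i j) := by
  rw [towards, dif_pos h]
  exact Walk.adj_snd (Walk.not_nil_of_ne hji)

lemma reachable_towards (h : G.Reachable j i) : G.Reachable (G.towards i j) i := by
  rw [towards, dif_pos h]
  exact ⟨h.exists_isPath.choose.tail⟩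

lemma IsAcyclic.towards_eq_iff (hG : G.IsAcyclic) (hv : G.Reachable v i) :
    (G.Reachable j i ∧ j ≠ i ∧ G.towards i j = v) ↔ G.Adj v j ∧ (v ≠ i → j ≠ G.towards i v) := by
  constructor
  · rintro ⟨hj, hji, rfl⟩
    obtain ⟨p, hp⟩ := hj.exists_isPath
    cases p with
    | nil => exact absurd rfl hji
    | cons hadj q =>
      rw [hG.towards_eq hp, Walk.snd_cons]
      refine ⟨hadj.symm, fun _ hjq => ?_⟩
      rw [hG.towards_eq hp.of_cons] at hjq
      exact (Walk.cons_isPath_iff _ _).1 hp |>.2 (hjq ▸ q.getVert_mem_support 1)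
  · rintro ⟨hadj, hne⟩
    obtain ⟨q, hq⟩ := hv.exists_isPath
    have hjq : j ∉ q.support := by
      by_cases hvi : v = i
      · subst hvi
        simp [Walk.eq_nil_iff_nil.2 (Walk.isPath_iff_nil.1 hq), hadj.ne']
      · intro hj
        exact hne hvi (hG.towards_eq hq ▸ hG.eq_snd_of_adj_start hq hadj hj)
    have hp : (Walk.cons hadj.symm q).IsPath := hq.cons hjq
    exact ⟨⟨Walk.cons hadj.symm q⟩, fun hji => hjq (hji ▸ q.end_mem_support),
      by rw [hG.towards_eq hp, Walk.snd_cons]⟩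

end Towards

section DegreeWeight

variable [Fintype V] (G) [DecidableRel G.Adj]

noncomputable def degreeWeight (a b : V) : ℝ :=
  if G.Adj a b then 1 / (G.degree b : ℝ) else 0

variable {G}

lemma adj_of_degreeWeight_ne_zero ⦃a b : V⦄ (h : degreeWeight G a b ≠ 0) : G.Adj a b := by
  by_contra hab
  simp [degreeWeight, hab] at h

lemma IsAcyclic.degree_mul_cPath_degreeWeight [DecidableEq V] (hG : G.IsAcyclic)
    (h : G.Reachable j i) (hji : j ≠ i) :
    G.degree j * cPath (degreeWeight G) univ {i} j =
      cPath (degreeWeight G) univ {i} (G.towards i j) := by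
  obtain ⟨p, hp⟩ := h.exists_isPath
  cases p with
  | nil => exact absurd rfl hji
  | cons hadj q =>
    have hdeg : (G.degree j : ℝ) ≠ 0 := by
      exact_mod_cast (G.degree_pos_iff_exists_adj j).2 ⟨_, hadj⟩ |>.ne'
    rw [hG.towards_eq hp, Walk.snd_cons, hG.cPath_univ_singleton adj_of_degreeWeight_ne_zero hp,
      hG.cPath_univ_singleton adj_of_degreeWeight_ne_zero hp.of_cons, Walk.length_cons,
      Fin.prod_univ_succ]
    simp only [Fin.coe_ofNat_eq_mod, Nat.zero_mod, zero_add, Walk.getVert_cons_succ,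
      Walk.getVert_zero, Fin.val_succ]
    rw [degreeWeight, if_pos hadj.symm]
    field_simp

lemma IsAcyclic.card_filter_towards_eq [DecidableEq V] (hG : G.IsAcyclic) {R : Finset V}
    (hR : ∀ j, j ∈ R ↔ G.Reachable j i) (hv : v ∈ R) :
    #{j ∈ R.erase i | G.towards i j = v} + (if v = i then 0 else 1) = G.degree v := by
  have hmem : ∀ j, j ∈ {j ∈ R.erase i | G.towards i j = v} ↔
      G.Adj v j ∧ (v ≠ i → j ≠ G.towards i v) := fun j => by
    rw [← hG.towards_eq_iff ((hR v).1 hv)]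
    simp only [mem_filter, mem_erase, hR]
    tauto
  split_ifs with hvi
  · rw [add_zero, ← card_neighborFinset_eq_degree]
    congr 1
    ext j
    rw [hmem, mem_neighborFinset]
    simp [hvi]
  · have hfiber :
        {j ∈ R.erase i | G.towards i j = v} = (G.neighborFinset v).erase (G.towards i v) := by
      ext j
      rw [hmem, mem_erase, mem_neighborFinset]
      tauto
    rw [hfiber, card_erase_add_one ((mem_neighborFinset _ _ _).2 (((hR v).1 hv).adj_towards hvi)),
      card_neighborFinset_eq_degree]

end DegreeWeight

end SimpleGraph

open SimpleGraph

theorem stmt19_general {V : Type*} [Fintype V] [DecidableEq V]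
    (G : SimpleGraph V) [DecidableRel G.Adj]
    (hac : G.IsAcyclic) (i : V) :
    sigmaInfl (fun a b => if G.Adj a b then (1 : ℝ) / (G.degree b : ℝ) else 0)
        Finset.univ {i}
      = (G.degree i : ℝ) + 1 := by
  classical
  set f := cPath (degreeWeight G) univ {i}
  let R : Finset V := {j | G.Reachable j i}
  have hR : ∀ j, j ∈ R ↔ G.Reachable j i := by simp [R]
  have hfi : f i = 1 := hac.cPath_univ_singleton adj_of_degreeWeight_ne_zero .nil
  have hsum : ∑ j ∈ R.erase i, f j = G.degree i * f i :=
    sum_erase_eq_mul_of_card_fiber ((hR i).2 .rfl)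
      (fun j hj => (hR _).2 (reachable_towards ((hR j).1 (mem_of_mem_erase hj))))
      (fun v hv => hac.card_filter_towards_eq hR hv)
      (fun j hj => hac.degree_mul_cPath_degreeWeight ((hR j).1 (mem_of_mem_erase hj))
        (ne_of_mem_erase hj))
  change ∑ j ∈ univ, f j = _
  rw [← sum_subset (subset_univ R) fun j _ hj =>
      cPath_univ_singleton_of_not_reachable adj_of_degreeWeight_ne_zero ((hR j).not.1 hj),
    ← add_sum_erase R f ((hR i).2 .rfl), hsum, hfi]
  ring

theorem stmt19 {V : Type*} [Fintype V] [DecidableEq V]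
    (G : SimpleGraph V) [DecidableRel G.Adj]
    (hac : G.IsAcyclic) (hdeg : ∀ v : V, 0 < G.degree v) (i : V) :
    sigmaInfl (fun a b => if G.Adj a b then (1 : ℝ) / (G.degree b : ℝ) else 0)
        Finset.univ {i}
      = (G.degree i : ℝ) + 1 :=
  stmt19_general G hac i
end
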